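/- arXiv:2601.22334 — 11 statements merged into one kernel-verified Lean document; each statement's English description precedes it below -/
import Mathlib

section
/- Let n, k, b be positive integers with (k−1)·b + 1 ≤ n, and let C be an n×n lower triangular Toeplitz matrix whose first-column entries satisfy c_0 ≥ c_1 ≥ … ≥ c_{n−1} ≥ 0 (i.e., C_{ij} = c_{i−j} for i ≥ j and C_{ij} = 0 for i < j). Then for every (k,b)-admissible set π ⊆ {1,…,n}, the Euclidean norm of ∑_{i∈π} C_{:,i} is at most the Euclidean norm of ∑_{j=0}^{k−1} C_{:,jb+1}; that is, the supremum over admissible participation patterns is attained at the leftmost b-separated columns 1, 1+b, …, 1+(k−1)b. -/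
open Finset

/-- Euclidean norm of a vector in `ℝⁿ`. -/
noncomputable def norm2 {n : ℕ} (v : Fin n → ℝ) : ℝ := Real.sqrt (∑ i, v i ^ 2)

/-- Frobenius norm of a square matrix. -/
noncomputable def frob {n : ℕ} (B : Matrix (Fin n) (Fin n) ℝ) : ℝ :=
  Real.sqrt (∑ i, ∑ j, B i j ^ 2)

/-- `‖B‖_{2→∞}`: the maximum Euclidean norm of a row of `B`. -/
noncomputable def rowMax {n : ℕ} (B : Matrix (Fin n) (Fin n) ℝ) : ℝ :=
  ⨆ i : Fin n, norm2 (fun j => B i j)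

/-- The `n × n` prefix-sum matrix: lower triangular, all entries on or below the diagonal are 1. -/
def Amat (n : ℕ) : Matrix (Fin n) (Fin n) ℝ :=
  fun i j => if (j : ℕ) ≤ (i : ℕ) then 1 else 0

/-- The DP-λCGD strategy matrix `C_λ`: lower triangular Toeplitz with `(C_λ)_{ij} = λ^{i-j}`. -/
noncomputable def Cmat (n : ℕ) (l : ℝ) : Matrix (Fin n) (Fin n) ℝ :=
  fun i j => if (j : ℕ) ≤ (i : ℕ) then l ^ ((i : ℕ) - (j : ℕ)) else 0

/-- The inverse `C_λ⁻¹`: ones on the diagonal, `-λ` on the first subdiagonal, zero elsewhere. -/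
noncomputable def Cinvmat (n : ℕ) (l : ℝ) : Matrix (Fin n) (Fin n) ℝ :=
  fun i j => if (i : ℕ) = (j : ℕ) then 1 else if (i : ℕ) = (j : ℕ) + 1 then -l else 0

/-- `sens_{k,b}(C)`: Euclidean norm of `∑_{j=0}^{k-1} C_{:,jb+1}` (columns 1-indexed, so the
column of 1-based index `j*b + 1` is the column of `Fin`-index `j*b`). -/
noncomputable def sens (n k b : ℕ) (C : Matrix (Fin n) (Fin n) ℝ) : ℝ :=
  norm2 (fun i => ∑ j ∈ Finset.range k, if h : j * b < n then C i ⟨j * b, h⟩ else 0)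

/-- `d_j`: Euclidean norm of the `j`-th column of `C_λ`. -/
noncomputable def dcol (n : ℕ) (l : ℝ) (j : Fin n) : ℝ :=
  norm2 (fun i => Cmat n l i j)

/-- The column-normalized DP-λCGD strategy matrix `C̃ = C_λ D⁻¹`. -/
noncomputable def Ctil (n : ℕ) (l : ℝ) : Matrix (Fin n) (Fin n) ℝ :=
  Cmat n l * (Matrix.diagonal (dcol n l))⁻¹

/-- For a lower triangular Toeplitz matrix `C` with decreasing nonnegative
first-column entries, and any (k,b)-admissible participation set π, the norm of the
corresponding column sum is at most the norm of the sum of the leftmost b-separated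
columns 1, 1+b, …, 1+(k−1)b, i.e. at most `sens n k b C`. -/
theorem stmt_0 (n k b : ℕ) (hk : 1 ≤ k) (hb : 1 ≤ b) (hn : (k - 1) * b + 1 ≤ n)
    (c : Fin n → ℝ) (hnonneg : ∀ i, 0 ≤ c i)
    (hmono : ∀ i j : Fin n, i ≤ j → c j ≤ c i)
    (C : Matrix (Fin n) (Fin n) ℝ)
    (hC : ∀ i j : Fin n, C i j =
      if _ : (j : ℕ) ≤ (i : ℕ) then
        c ⟨(i : ℕ) - (j : ℕ), by have := i.isLt; omega⟩ else 0)
    (π : Finset (Fin n)) (hcard : π.card ≤ k)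
    (hsep : ∀ i ∈ π, ∀ j ∈ π, i ≠ j → b ≤ Nat.dist (i : ℕ) (j : ℕ)) :
    norm2 (fun i => ∑ p ∈ π, C i p) ≤ sens n k b C := by
  have npos : 0 < n := by omega
  set c' : ℕ → ℝ := fun t => if h : t < n then c ⟨t, h⟩ else 0 with hc'def
  have hc'0 : ∀ t, 0 ≤ c' t := by
    intro t
    simp only [hc'def]
    split_ifs with h
    · exact hnonneg _
    · exact le_refl 0
  have hc'anti : ∀ s t : ℕ, s ≤ t → c' t ≤ c' s := by
    intro s t hst
    by_cases ht : t < n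
    · have hs : s < n := lt_of_le_of_lt hst ht
      simp only [hc'def, dif_pos ht, dif_pos hs]
      exact hmono ⟨s, hs⟩ ⟨t, ht⟩ (Fin.mk_le_mk.mpr hst)
    · have h0 : c' t = 0 := by simp only [hc'def, dif_neg ht]
      rw [h0]; exact hc'0 s
  have hCc : ∀ i j : Fin n, C i j = if (j:ℕ) ≤ (i:ℕ) then c' ((i:ℕ) - (j:ℕ)) else 0 := by
    intro i j
    rw [hC]
    by_cases h : (j:ℕ) ≤ (i:ℕ)
    · rw [dif_pos h, if_pos h]
      have hlt : (i:ℕ) - (j:ℕ) < n := by have := i.isLt; omega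
      simp only [hc'def, dif_pos hlt]
    · rw [dif_neg h, if_neg h]
  have hC0 : ∀ i j : Fin n, 0 ≤ C i j := by
    intro i j; rw [hCc]; split_ifs; exacts [hc'0 _, le_refl 0]
  set G : ℕ → ℕ → ℝ := fun a d => ∑ t ∈ Finset.range (n - a), c' t * c' (t + d) with hGdef
  have hGmono : ∀ a a' d d' : ℕ, a ≤ a' → d ≤ d' → G a' d' ≤ G a d := by
    intro a a' d d' ha hd
    simp only [hGdef]
    calc ∑ t ∈ Finset.range (n - a'), c' t * c' (t + d')
        ≤ ∑ t ∈ Finset.range (n - a'), c' t * c' (t + d) :=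
          Finset.sum_le_sum fun t _ =>
            mul_le_mul_of_nonneg_left (hc'anti _ _ (by omega)) (hc'0 t)
      _ ≤ ∑ t ∈ Finset.range (n - a), c' t * c' (t + d) :=
          Finset.sum_le_sum_of_subset_of_nonneg
            (Finset.range_subset_range.mpr (by omega))
            (fun t _ _ => mul_nonneg (hc'0 _) (hc'0 _))
  have key : ∀ p q : Fin n, (q:ℕ) ≤ (p:ℕ) →
      (∑ i, C i p * C i q) = G (p:ℕ) ((p:ℕ) - (q:ℕ)) := by
    intro p q hqp
    have hpn : (p:ℕ) < n := p.isLt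
    have h1 : (∑ i, C i p * C i q) = ∑ t ∈ Finset.range n,
        ((if (p:ℕ) ≤ t then c' (t - (p:ℕ)) else 0) *
         (if (q:ℕ) ≤ t then c' (t - (q:ℕ)) else 0)) := by
      rw [← Fin.sum_univ_eq_sum_range (fun t =>
        (if (p:ℕ) ≤ t then c' (t - (p:ℕ)) else 0) *
        (if (q:ℕ) ≤ t then c' (t - (q:ℕ)) else 0)) n]
      exact Finset.sum_congr rfl fun i _ => by rw [hCc, hCc]
    rw [h1, show Finset.range n = Finset.range ((p:ℕ) + (n - (p:ℕ))) from by
      congr 1; omega, Finset.sum_range_add]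
    have h3 : (∑ t ∈ Finset.range (p:ℕ),
        ((if (p:ℕ) ≤ t then c' (t - (p:ℕ)) else 0) *
         (if (q:ℕ) ≤ t then c' (t - (q:ℕ)) else 0))) = 0 :=
      Finset.sum_eq_zero fun t ht => by
        rw [if_neg (by have := Finset.mem_range.mp ht; omega), zero_mul]
    rw [h3, zero_add]
    simp only [hGdef]
    refine Finset.sum_congr rfl fun t ht => ?_
    rw [if_pos (show (p:ℕ) ≤ (p:ℕ) + t from by omega),
        if_pos (show (q:ℕ) ≤ (p:ℕ) + t from by omega)]
    congr 1
    · congr 1; omega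
    · congr 1; omega
  have expand : ∀ {α : Type} (s : Finset α) (f : α → Fin n),
      (∑ i, (∑ a ∈ s, C i (f a)) ^ 2)
        = ∑ a ∈ s, ∑ a' ∈ s, ∑ i, C i (f a) * C i (f a') := by
    intro α s f
    simp only [pow_two, Finset.sum_mul_sum]
    rw [Finset.sum_comm]
    exact Finset.sum_congr rfl fun a _ => Finset.sum_comm
  have hrbn : ∀ r, r < k → r * b < n := by
    intro r hr
    have h1 : r ≤ k - 1 := by omega
    have h2 : r * b ≤ (k - 1) * b := Nat.mul_le_mul h1 le_rfl
    omega
  set e0 : ℕ → Fin n := fun r => if h : r * b < n then ⟨r * b, h⟩ else ⟨0, npos⟩ with he0def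
  have he0v : ∀ r, r < k → ((e0 r : ℕ)) = r * b := by
    intro r hr
    simp only [he0def, dif_pos (hrbn r hr)]
  set e := π.orderEmbOfFin (rfl : π.card = π.card) with hedef
  have hmem : ∀ r : Fin π.card, e r ∈ π := fun r => Finset.orderEmbOfFin_mem π rfl r
  have hmono_e : StrictMono e := e.strictMono
  have hstep : ∀ r s : Fin π.card, (r:ℕ) < (s:ℕ) → (e r : ℕ) + b ≤ (e s : ℕ) := by
    intro r s hrs
    have hlt : e r < e s := hmono_e (Fin.lt_def.mpr hrs)
    have hvlt : (e r : ℕ) < (e s : ℕ) := Fin.lt_def.mp hlt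
    have hd := hsep _ (hmem r) _ (hmem s) (ne_of_lt hlt)
    rw [Nat.dist_eq_sub_of_le (le_of_lt hvlt)] at hd
    omega
  have hgap : ∀ (j : ℕ) (r s : Fin π.card), (s:ℕ) ≤ (r:ℕ) + j → (r:ℕ) ≤ (s:ℕ) →
      (e r : ℕ) + ((s:ℕ) - (r:ℕ)) * b ≤ (e s : ℕ) := by
    intro j
    induction j with
    | zero =>
      intro r s h1 h2
      have hrs : r = s := Fin.ext (by omega)
      subst hrs
      simp
    | succ j ih =>
      intro r s h1 h2
      by_cases hc : (s:ℕ) ≤ (r:ℕ) + j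
      · exact ih r s hc h2
      · have hrs : (r:ℕ) < (s:ℕ) := by omega
        have hsm : (s:ℕ) - 1 < π.card := by have := s.isLt; omega
        have h4 : (e r : ℕ) + ((s:ℕ) - 1 - (r:ℕ)) * b ≤ (e ⟨(s:ℕ) - 1, hsm⟩ : ℕ) :=
          ih r ⟨(s:ℕ) - 1, hsm⟩ (show (s:ℕ) - 1 ≤ (r:ℕ) + j by omega)
            (show (r:ℕ) ≤ (s:ℕ) - 1 by omega)
        have h5 : (e ⟨(s:ℕ) - 1, hsm⟩ : ℕ) + b ≤ (e s : ℕ) :=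
          hstep ⟨(s:ℕ) - 1, hsm⟩ s (show (s:ℕ) - 1 < (s:ℕ) by omega)
        have hv : (s:ℕ) - (r:ℕ) = ((s:ℕ) - 1 - (r:ℕ)) + 1 := by omega
        rw [hv, add_mul, one_mul]
        omega
  have hlow : ∀ r : Fin π.card, (r:ℕ) * b ≤ (e r : ℕ) := by
    intro r
    have h0 : (0:ℕ) < π.card := lt_of_le_of_lt (Nat.zero_le _) r.isLt
    have h : (e ⟨0, h0⟩ : ℕ) + ((r:ℕ) - 0) * b ≤ (e r : ℕ) :=
      hgap (r:ℕ) ⟨0, h0⟩ r (show (r:ℕ) ≤ 0 + (r:ℕ) by omega) (Nat.zero_le _)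
    have hz : ((r:ℕ) - 0) * b = (r:ℕ) * b := by rw [Nat.sub_zero]
    omega
  have haux : ∀ r s : Fin π.card, (s:ℕ) ≤ (r:ℕ) →
      (∑ i, C i (e r) * C i (e s)) ≤ ∑ i, C i (e0 (r:ℕ)) * C i (e0 (s:ℕ)) := by
    intro r s hsr
    have hrk : (r:ℕ) < k := lt_of_lt_of_le r.isLt hcard
    have hsk : (s:ℕ) < k := lt_of_lt_of_le s.isLt hcard
    have hes : (e s : ℕ) ≤ (e r : ℕ) := by
      rcases eq_or_lt_of_le hsr with h | h
      · rw [show s = r from Fin.ext h]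
      · exact le_of_lt (Fin.lt_def.mp (hmono_e (Fin.lt_def.mpr h)))
    have h0r := he0v (r:ℕ) hrk
    have h0s := he0v (s:ℕ) hsk
    have he0le : (e0 (s:ℕ) : ℕ) ≤ (e0 (r:ℕ) : ℕ) := by
      rw [h0r, h0s]; exact Nat.mul_le_mul hsr le_rfl
    rw [key _ _ hes, key _ _ he0le]
    have hgap' : (e s : ℕ) + ((r:ℕ) - (s:ℕ)) * b ≤ (e r : ℕ) :=
      hgap (r:ℕ) s r (by omega) (by omega)
    apply hGmono
    · rw [h0r]; exact hlow r
    · rw [h0r, h0s]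
      have hmul : ((r:ℕ) - (s:ℕ)) * b = (r:ℕ) * b - (s:ℕ) * b := Nat.sub_mul _ _ _
      have hmul2 : (s:ℕ) * b ≤ (r:ℕ) * b := Nat.mul_le_mul hsr le_rfl
      omega
  have hpair : ∀ r s : Fin π.card,
      (∑ i, C i (e r) * C i (e s)) ≤ ∑ i, C i (e0 (r:ℕ)) * C i (e0 (s:ℕ)) := by
    intro r s
    rcases le_total (s:ℕ) (r:ℕ) with h | h
    · exact haux r s h
    · calc (∑ i, C i (e r) * C i (e s)) = ∑ i, C i (e s) * C i (e r) :=
            Finset.sum_congr rfl fun i _ => mul_comm _ _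
        _ ≤ ∑ i, C i (e0 (s:ℕ)) * C i (e0 (r:ℕ)) := haux s r h
        _ = ∑ i, C i (e0 (r:ℕ)) * C i (e0 (s:ℕ)) :=
            Finset.sum_congr rfl fun i _ => mul_comm _ _
  have hinj : ∀ a ∈ Finset.univ, ∀ a' ∈ Finset.univ, e a = e a' → a = a' :=
    fun a _ a' _ h => e.injective h
  have himg : Finset.image (fun r => e r) Finset.univ = π := by
    ext x
    simp only [Finset.mem_image, Finset.mem_univ, true_and]
    constructor
    · rintro ⟨r, rfl⟩; exact hmem r
    · intro hx
      have hx' : x ∈ Set.range (⇑e) := by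
        rw [hedef, Finset.range_orderEmbOfFin]
        exact Finset.mem_coe.mpr hx
      obtain ⟨r, hr⟩ := hx'
      exact ⟨r, hr⟩
  have hconv : ∀ i : Fin n,
      (∑ j ∈ Finset.range k, if h : j * b < n then C i ⟨j * b, h⟩ else 0)
        = ∑ j ∈ Finset.range k, C i (e0 j) := by
    intro i
    refine Finset.sum_congr rfl fun j hj => ?_
    have hjk := Finset.mem_range.mp hj
    rw [dif_pos (hrbn j hjk)]
    congr 1
    exact Fin.ext (he0v j hjk).symm
  have hmain : (∑ i, (∑ p ∈ π, C i p) ^ 2)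
      ≤ ∑ i, (∑ j ∈ Finset.range k, if h : j * b < n then C i ⟨j * b, h⟩ else 0) ^ 2 := by
    calc (∑ i, (∑ p ∈ π, C i p) ^ 2)
        = ∑ p ∈ π, ∑ q ∈ π, ∑ i, C i p * C i q := expand π (fun p => p)
      _ = ∑ r : Fin π.card, ∑ s : Fin π.card, ∑ i, C i (e r) * C i (e s) := by
          conv_lhs => rw [← himg]
          rw [Finset.sum_image hinj]
          exact Finset.sum_congr rfl fun r _ => by rw [Finset.sum_image hinj]
      _ ≤ ∑ r : Fin π.card, ∑ s : Fin π.card, ∑ i, C i (e0 (r:ℕ)) * C i (e0 (s:ℕ)) :=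
          Finset.sum_le_sum fun r _ => Finset.sum_le_sum fun s _ => hpair r s
      _ = ∑ r : Fin π.card, ∑ a' ∈ Finset.range π.card, ∑ i, C i (e0 (r:ℕ)) * C i (e0 a') :=
          Finset.sum_congr rfl fun r _ =>
            Fin.sum_univ_eq_sum_range (fun a' => ∑ i, C i (e0 (r:ℕ)) * C i (e0 a')) π.card
      _ = ∑ a ∈ Finset.range π.card, ∑ a' ∈ Finset.range π.card, ∑ i, C i (e0 a) * C i (e0 a') :=
          Fin.sum_univ_eq_sum_range
            (fun a => ∑ a' ∈ Finset.range π.card, ∑ i, C i (e0 a) * C i (e0 a')) π.card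
      _ ≤ ∑ a ∈ Finset.range π.card, ∑ a' ∈ Finset.range k, ∑ i, C i (e0 a) * C i (e0 a') :=
          Finset.sum_le_sum fun a _ =>
            Finset.sum_le_sum_of_subset_of_nonneg (Finset.range_subset_range.mpr hcard)
              (fun a' _ _ => Finset.sum_nonneg fun i _ => mul_nonneg (hC0 _ _) (hC0 _ _))
      _ ≤ ∑ a ∈ Finset.range k, ∑ a' ∈ Finset.range k, ∑ i, C i (e0 a) * C i (e0 a') :=
          Finset.sum_le_sum_of_subset_of_nonneg (Finset.range_subset_range.mpr hcard)
            (fun a _ _ => Finset.sum_nonneg fun a' _ =>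
              Finset.sum_nonneg fun i _ => mul_nonneg (hC0 _ _) (hC0 _ _))
      _ = ∑ i, (∑ j ∈ Finset.range k, C i (e0 j)) ^ 2 := (expand (Finset.range k) e0).symm
      _ = ∑ i, (∑ j ∈ Finset.range k, if h : j * b < n then C i ⟨j * b, h⟩ else 0) ^ 2 :=
          Finset.sum_congr rfl fun i _ => by rw [hconv i]
  simp only [norm2, sens]
  exact Real.sqrt_le_sqrt hmain
end

section
/- There exists an absolute constant c > 0 such that for all positive integers k and b with n = k·b, the infimum over λ ∈ [0,1) of ‖A C_λ^{-1}‖_{2→∞} · sens_{k,b}(C_λ) is at most c·(k + √k · n^{1/4}). -/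
open Finset

/-! Take `λ = 1 - n^{-1/2}`. A row of `A C_λ⁻¹` is `(1-λ, …, 1-λ, 1, 0, …, 0)`, of norm at most
`√(1 + n (1-λ)²) = √2`. Writing a row index as `r + b q` with `r < b`, the corresponding entry of
`∑_j C_{:, jb}` is `λ^r ∑_{m ≤ q} λ^{bm} ≤ λ^r S` with `S = ∑_{m<k} λ^{bm} ≤ 1 + 1/(b(1-λ))`
(Bernoulli), so `sens² ≤ k S² ∑_{r<b} λ^{2r} ≤ 2k (1/(1-λ) + 1/(b(1-λ)²)) = 2k(√n + k)`, and the
product is at most `2 (k + √k n^{1/4})`. -/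

lemma one_sub_pow_le_inv_one_add_mul {x : ℝ} (h0 : 0 ≤ x) (h1 : x ≤ 1) (b : ℕ) :
    (1 - x) ^ b ≤ (1 + b * x)⁻¹ := by
  have h1x : 0 ≤ 1 - x := by linarith
  rw [← one_div, le_div_iff₀ (by positivity)]
  calc (1 - x) ^ b * (1 + b * x) ≤ (1 - x) ^ b * (1 + x) ^ b := by
        gcongr
        exact one_add_mul_le_pow (by linarith) b
    _ = (1 - x ^ 2) ^ b := by rw [← mul_pow]; ring
    _ ≤ 1 := pow_le_one₀ (by nlinarith) (by nlinarith)

lemma geom_sum_le_inv_one_sub {y : ℝ} (h0 : 0 ≤ y) (h1 : y < 1) (t : ℕ) :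
    ∑ m ∈ range t, y ^ m ≤ (1 - y)⁻¹ := by
  simpa [← Finset.range_eq_Ico] using geom_sum_Ico_le_of_lt_one (m := 0) (n := t) h0 h1

lemma geom_sum_pow_le {l : ℝ} (hl0 : 0 ≤ l) (hl1 : l < 1) {b : ℕ} (hb : 0 < b) (k : ℕ) :
    ∑ m ∈ range k, (l ^ b) ^ m ≤ 1 + (b * (1 - l))⁻¹ := by
  have hlb : l ^ b ≤ (1 + b * (1 - l))⁻¹ := by
    simpa using one_sub_pow_le_inv_one_add_mul (x := 1 - l) (by linarith) (by linarith) b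
  generalize hc : (b : ℝ) * (1 - l) = c at hlb
  have hc0 : 0 < c := hc ▸ mul_pos (by exact_mod_cast hb) (by linarith)
  have hpos : 0 < 1 - (1 + c)⁻¹ := sub_pos.mpr (inv_lt_one_of_one_lt₀ (by linarith))
  calc _ ≤ (1 - l ^ b)⁻¹ := geom_sum_le_inv_one_sub (by positivity) (pow_lt_one₀ hl0 hl1 hb.ne') k
    _ ≤ (1 - (1 + c)⁻¹)⁻¹ := by gcongr
    _ = 1 + c⁻¹ := by
        rw [inv_eq_iff_eq_inv]
        field_simp
        ring

lemma Amat_mul_Cinvmat_apply (n : ℕ) (l : ℝ) (i j : Fin n) :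
    (Amat n * Cinvmat n l) i j =
      if (j : ℕ) = i then 1 else if (j : ℕ) < i then 1 - l else 0 := by
  have hsplit : ∀ m : Fin n, Amat n i m * Cinvmat n l m j =
      (if m = j then Amat n i j else 0) +
        if (m : ℕ) = j + 1 then (if (j : ℕ) + 1 ≤ i then -l else 0) else 0 := by
    intro m
    simp only [Amat, Cinvmat, Fin.ext_iff]
    split_ifs <;> first | omega | simp_all
  rw [Matrix.mul_apply, Finset.sum_congr rfl fun m _ => hsplit m, Finset.sum_add_distrib,
    Finset.sum_ite_eq', Fin.sum_univ_eq_sum_range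
      (fun m => if m = (j : ℕ) + 1 then (if (j : ℕ) + 1 ≤ i then -l else 0) else 0),
    Finset.sum_ite_eq']
  simp only [Amat, Finset.mem_univ, Finset.mem_range, if_true]
  split_ifs <;> first | omega | ring

lemma rowMax_Amat_mul_Cinvmat_le (n : ℕ) (l : ℝ) :
    rowMax (Amat n * Cinvmat n l) ≤ √(1 + n * (1 - l) ^ 2) := by
  refine Real.iSup_le (fun i => Real.sqrt_le_sqrt ?_) (Real.sqrt_nonneg _)
  calc ∑ j, ((Amat n * Cinvmat n l) i j) ^ 2
      ≤ ∑ j : Fin n, ((if j = i then 1 else 0) + (1 - l) ^ 2) := by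
        refine Finset.sum_le_sum fun j _ => ?_
        rw [Amat_mul_Cinvmat_apply]
        simp only [Fin.ext_iff]
        split_ifs <;> first | omega | nlinarith [sq_nonneg (1 - l)]
    _ = 1 + n * (1 - l) ^ 2 := by simp [Finset.sum_add_distrib]

lemma Cmat_col_apply (n b j : ℕ) (l : ℝ) (i : Fin n) :
    (if h : j * b < n then Cmat n l i ⟨j * b, h⟩ else 0) =
      if j * b ≤ i then l ^ ((i : ℕ) - j * b) else 0 := by
  simp only [Cmat]
  split_ifs <;> first | rfl | omega

lemma sum_range_ite_pow_le_geom (l : ℝ) (hl : 0 ≤ l) {k b q r : ℕ} (hq : q < k)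
    (hr : r < b) :
    ∑ j ∈ range k, (if j * b ≤ r + b * q then l ^ (r + b * q - j * b) else 0) ≤
      l ^ r * ∑ m ∈ range k, (l ^ b) ^ m := by
  have hterm : ∀ j ∈ range k, (if j * b ≤ r + b * q then l ^ (r + b * q - j * b) else 0) =
      if j ∈ range (q + 1) then l ^ r * (l ^ b) ^ (q - j) else 0 := by
    intro j _
    rcases le_or_gt j q with hj | hj
    · have hexp : r + b * q - j * b = r + b * (q - j) := by
        rw [Nat.mul_sub, Nat.mul_comm j b]
        have := Nat.mul_le_mul_left b hj
        omega
      rw [if_pos (by nlinarith), if_pos (Finset.mem_range.mpr (by omega)), hexp, pow_add, pow_mul]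
    · rw [if_neg (by nlinarith), if_neg (by simpa using hj)]
  calc ∑ j ∈ range k, (if j * b ≤ r + b * q then l ^ (r + b * q - j * b) else 0)
      = ∑ j ∈ range (q + 1), l ^ r * (l ^ b) ^ (q - j) := by
        rw [Finset.sum_congr rfl hterm, Finset.sum_ite_mem,
          Finset.inter_eq_right.mpr (Finset.range_subset_range.mpr hq)]
    _ = l ^ r * ∑ m ∈ range (q + 1), (l ^ b) ^ m := by
        rw [← Finset.mul_sum, ← Finset.sum_range_reflect (fun m => (l ^ b) ^ m) (q + 1)]
        simp only [Nat.add_sub_cancel]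
    _ ≤ l ^ r * ∑ m ∈ range k, (l ^ b) ^ m := by
        gcongr
        exact hq

lemma sens_Cmat_sq_le (k b : ℕ) (l : ℝ) (hl : 0 ≤ l) :
    sens (k * b) k b (Cmat (k * b) l) ^ 2 ≤
      k * (∑ m ∈ range k, (l ^ b) ^ m) ^ 2 * ∑ r ∈ range b, (l ^ 2) ^ r := by
  set S := ∑ m ∈ range k, (l ^ b) ^ m
  unfold sens norm2
  rw [Real.sq_sqrt (by positivity), ← finProdFinEquiv.sum_comp, Fintype.sum_prod_type]
  simp only [Cmat_col_apply, finProdFinEquiv_apply_val]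
  calc _ ≤ ∑ q : Fin k, ∑ r : Fin b, (l ^ (r : ℕ) * S) ^ 2 := by
        gcongr with q _ r _
        exact sum_range_ite_pow_le_geom l hl q.isLt r.isLt
    _ = k * S ^ 2 * ∑ r ∈ range b, (l ^ 2) ^ r := by
        rw [Finset.sum_const, Finset.card_univ, Fintype.card_fin, nsmul_eq_mul,
          Fin.sum_univ_eq_sum_range (fun r => (l ^ r * S) ^ 2), Finset.mul_sum, Finset.mul_sum]
        exact Finset.sum_congr rfl fun r _ => by ring

lemma sens_Cmat_sq_le_of_lt_one (k : ℕ) {b : ℕ} (hb : 0 < b) {l : ℝ} (hl0 : 0 ≤ l)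
    (hl1 : l < 1) :
    sens (k * b) k b (Cmat (k * b) l) ^ 2 ≤ 2 * k * ((1 - l)⁻¹ + (b * (1 - l) ^ 2)⁻¹) := by
  set S := ∑ m ∈ range k, (l ^ b) ^ m
  set G := ∑ r ∈ range b, (l ^ 2) ^ r
  set u := (b * (1 - l))⁻¹
  have hS : S ≤ 1 + u := geom_sum_pow_le hl0 hl1 hb k
  have hS2 : S ^ 2 ≤ 2 + 2 * u ^ 2 := by
    have : 0 ≤ S := Finset.sum_nonneg fun m _ => by positivity
    nlinarith [sq_nonneg (1 - u)]
  have hG_inv : G ≤ (1 - l)⁻¹ :=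
    (geom_sum_le_inv_one_sub (by positivity) (by nlinarith) b).trans
      (inv_anti₀ (by linarith) (by nlinarith))
  have hG_b : G ≤ b := by
    calc G ≤ ∑ _r ∈ range b, (1 : ℝ) :=
          Finset.sum_le_sum fun r _ => pow_le_one₀ (by positivity) (by nlinarith)
      _ = b := by simp
  calc sens (k * b) k b (Cmat (k * b) l) ^ 2 ≤ k * S ^ 2 * G := sens_Cmat_sq_le k b l hl0
    _ ≤ k * (2 + 2 * u ^ 2) * G := by gcongr
    _ = 2 * k * (G + u ^ 2 * G) := by ring
    _ ≤ 2 * k * ((1 - l)⁻¹ + u ^ 2 * b) := by gcongr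
    _ = 2 * k * ((1 - l)⁻¹ + (b * (1 - l) ^ 2)⁻¹) := by
        have : (b : ℝ) ≠ 0 := by positivity
        simp only [u]
        field_simp

lemma one_sub_inv_sq_mem_Ico {t : ℝ} (ht : 1 ≤ t) : 1 - (t ^ 2)⁻¹ ∈ Set.Ico (0 : ℝ) 1 :=
  ⟨sub_nonneg.mpr (inv_le_one_of_one_le₀ (one_le_pow₀ ht)), sub_lt_self _ (by positivity)⟩

lemma rowMax_mul_sens_le {k b : ℕ} (hb : 0 < b) {t : ℝ} (ht : 1 ≤ t)
    (htn : t ^ 4 = (k * b : ℕ)) :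
    rowMax (Amat (k * b) * Cinvmat (k * b) (1 - (t ^ 2)⁻¹)) *
        sens (k * b) k b (Cmat (k * b) (1 - (t ^ 2)⁻¹)) ≤ 2 * (k + √k * t) := by
  obtain ⟨hl0, hl1⟩ := one_sub_inv_sq_mem_Ico ht
  set s := sens (k * b) k b (Cmat (k * b) (1 - (t ^ 2)⁻¹))
  have hrow : rowMax (Amat (k * b) * Cinvmat (k * b) (1 - (t ^ 2)⁻¹)) ≤ √2 := by
    refine (rowMax_Amat_mul_Cinvmat_le _ _).trans_eq ?_
    rw [← htn]
    field_simp
    norm_num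
  have hsens : s ^ 2 ≤ 2 * (k ^ 2 + k * t ^ 2) := by
    refine (sens_Cmat_sq_le_of_lt_one k hb hl0 hl1).trans_eq ?_
    push_cast at htn
    have : (b : ℝ) ≠ 0 := by positivity
    field_simp
    linear_combination (k : ℝ) * htn
  have hs0 : 0 ≤ s := Real.sqrt_nonneg _
  refine (mul_le_mul_of_nonneg_right hrow hs0).trans
    (le_of_pow_le_pow_left₀ two_ne_zero (by positivity) ?_)
  have hk : √(k : ℝ) ^ 2 = k := Real.sq_sqrt (Nat.cast_nonneg k)
  have hkt : 0 ≤ k * (√k * t) := by positivity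
  calc (√2 * s) ^ 2 = 2 * s ^ 2 := by rw [mul_pow, Real.sq_sqrt zero_le_two]
    _ ≤ 4 * (k ^ 2 + k * t ^ 2) := by linarith
    _ ≤ (2 * (k + √k * t)) ^ 2 := by nlinarith

/-- There is an absolute constant c > 0 such that for all k, b ≥ 1 with
n = k·b, the infimum over λ ∈ [0,1) of ‖A C_λ⁻¹‖_{2→∞} · sens_{k,b}(C_λ) is at most
c·(k + √k · n^{1/4}). -/
theorem stmt_1 : ∃ c : ℝ, 0 < c ∧ ∀ k b : ℕ, 1 ≤ k → 1 ≤ b →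
    (⨅ l : Set.Ico (0 : ℝ) 1,
      rowMax (Amat (k * b) * Cinvmat (k * b) (l : ℝ)) *
        sens (k * b) k b (Cmat (k * b) (l : ℝ)))
    ≤ c * ((k : ℝ) + Real.sqrt k * ((k * b : ℕ) : ℝ) ^ ((1 : ℝ) / 4)) := by
  refine ⟨2, two_pos, fun k b hk hb => ?_⟩
  have hn : (1 : ℝ) ≤ (k * b : ℕ) := by exact_mod_cast Nat.one_le_iff_ne_zero.mpr (by positivity)
  set t := ((k * b : ℕ) : ℝ) ^ ((1 : ℝ) / 4)
  have ht : 1 ≤ t := Real.one_le_rpow hn (by norm_num)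
  have htn : t ^ 4 = (k * b : ℕ) := by
    rw [← Real.rpow_natCast, ← Real.rpow_mul (by positivity)]
    norm_num
  have hbdd : BddBelow (Set.range fun l : Set.Ico (0 : ℝ) 1 =>
      rowMax (Amat (k * b) * Cinvmat (k * b) l) * sens (k * b) k b (Cmat (k * b) l)) := by
    refine ⟨0, ?_⟩
    rintro _ ⟨l, rfl⟩
    exact mul_nonneg (Real.iSup_nonneg fun _ => Real.sqrt_nonneg _) (Real.sqrt_nonneg _)
  exact (ciInf_le hbdd ⟨_, one_sub_inv_sq_mem_Ico ht⟩).trans (rowMax_mul_sens_le hb ht htn)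
end

section
/- Let n = k·b with k, b ≥ 1 positive integers and λ ∈ (0,1). Then the squared sensitivity of C_λ satisfies sens_{k,b}(C_λ)² = ‖∑_{j=0}^{k−1}(C_λ)_{:,jb+1}‖₂² = (1 − λ^{2b}) / ((1 − λ²)(1 − λ^b)²) · ∑_{j=1}^{k} (1 − λ^{bj})². -/
open Finset

lemma row_formula (k b : ℕ) (hb : 1 ≤ b) (l : ℝ) (hlb : l ^ b ≠ 1)
    (i : ℕ) (hi : i < k * b) :
    ∑ j ∈ Finset.range k, (if j * b ≤ i then l ^ (i - j * b) else 0) =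
      l ^ (i % b) * ((1 - l ^ (b * (i / b + 1))) / (1 - l ^ b)) := by
  set q := i / b with hq
  set r := i % b with hr
  have hbpos : 0 < b := hb
  have hqb : q * b + r = i := by rw [hq, hr, Nat.mul_comm]; exact Nat.div_add_mod i b
  have hrb : r < b := Nat.mod_lt _ hbpos
  have hq1 : q + 1 ≤ k := by
    have : q < k := Nat.div_lt_of_lt_mul (by rw [Nat.mul_comm] at hi; exact hi)
    omega
  rw [Finset.range_eq_Ico, ← Finset.sum_Ico_consecutive _ (Nat.zero_le (q+1)) hq1]
  have h2 : ∑ j ∈ Finset.Ico (q+1) k, (if j * b ≤ i then l ^ (i - j * b) else 0) = 0 := by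
    apply Finset.sum_eq_zero
    intro j hj
    rw [Finset.mem_Ico] at hj
    have hj1 : (q+1) * b ≤ j * b := Nat.mul_le_mul_right _ hj.1
    have : ¬ j * b ≤ i := by rw [Nat.add_mul] at hj1; omega
    simp [this]
  rw [h2, add_zero, ← Finset.range_eq_Ico]
  have h1 : ∀ j ∈ Finset.range (q+1), (if j * b ≤ i then l ^ (i - j * b) else 0)
      = l ^ (i - j * b) := by
    intro j hj
    rw [Finset.mem_range, Nat.lt_succ_iff] at hj
    have hjb : j * b ≤ q * b := Nat.mul_le_mul_right _ hj
    have : j * b ≤ i := by omega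
    simp [this]
  rw [Finset.sum_congr rfl h1, ← Finset.sum_range_reflect]
  have h3 : ∀ j ∈ Finset.range (q+1), l ^ (i - (q + 1 - 1 - j) * b) = l ^ r * (l ^ b) ^ j := by
    intro j hj
    rw [Finset.mem_range, Nat.lt_succ_iff] at hj
    have hjb : j * b ≤ q * b := Nat.mul_le_mul_right _ hj
    have e1 : q + 1 - 1 - j = q - j := by omega
    have e2 : i - (q - j) * b = r + j * b := by rw [Nat.sub_mul]; omega
    rw [e1, e2, pow_add, pow_mul']
  rw [Finset.sum_congr rfl h3, ← Finset.mul_sum, geom_sum_eq hlb, ← pow_mul]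
  rw [← neg_div_neg_eq, neg_sub, neg_sub, mul_comm b (q+1)]

/-- closed form for the squared sensitivity of C_λ. -/
theorem stmt_2 (n k b : ℕ) (hk : 1 ≤ k) (hb : 1 ≤ b) (hn : n = k * b)
    (l : ℝ) (hl : l ∈ Set.Ioo (0 : ℝ) 1) :
    (sens n k b (Cmat n l)) ^ 2 =
      (1 - l ^ (2 * b)) / ((1 - l ^ 2) * (1 - l ^ b) ^ 2) *
        ∑ j ∈ Finset.Icc 1 k, (1 - l ^ (b * j)) ^ 2 := by
  obtain ⟨hl0, hl1⟩ := hl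
  have hb0 : 0 < b := hb
  have hlb_lt : l ^ b < 1 := pow_lt_one₀ hl0.le hl1 (by omega)
  have hlb : l ^ b ≠ 1 := ne_of_lt hlb_lt
  have hl2 : l ^ 2 ≠ 1 := ne_of_lt (pow_lt_one₀ hl0.le hl1 two_ne_zero)
  subst hn
  unfold sens norm2
  rw [Real.sq_sqrt (by positivity)]
  have key : ∀ i : Fin (k*b),
      (∑ j ∈ Finset.range k, if h : j * b < k*b then Cmat (k*b) l i ⟨j*b, h⟩ else 0)
        = l ^ ((i:ℕ) % b) * ((1 - l ^ (b * ((i:ℕ) / b + 1))) / (1 - l ^ b)) := by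
    intro i
    rw [← row_formula k b hb l hlb i i.isLt]
    apply Finset.sum_congr rfl
    intro j hj
    rw [Finset.mem_range] at hj
    have hjb : j * b < k * b := by exact Nat.mul_lt_mul_of_lt_of_le hj le_rfl hb0
    rw [dif_pos hjb]
    rfl
  simp only [key]
  rw [← Equiv.sum_comp (finProdFinEquiv : Fin k × Fin b ≃ Fin (k*b))]
  rw [Fintype.sum_prod_type]
  have key2 : ∀ (q : Fin k) (r : Fin b),
      (l ^ (((finProdFinEquiv (q, r) : Fin (k*b)) : ℕ) % b) *
        ((1 - l ^ (b * (((finProdFinEquiv (q, r) : Fin (k*b)) : ℕ) / b + 1))) / (1 - l ^ b))) ^ 2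
      = (l ^ 2) ^ (r : ℕ) * ((1 - l ^ (b * ((q : ℕ) + 1))) ^ 2 / (1 - l ^ b) ^ 2) := by
    intro q r
    have hv : ((finProdFinEquiv (q, r) : Fin (k*b)) : ℕ) = (r : ℕ) + b * (q : ℕ) := rfl
    have hmod : ((r : ℕ) + b * (q : ℕ)) % b = (r : ℕ) := by
      rw [Nat.add_mul_mod_self_left, Nat.mod_eq_of_lt r.isLt]
    have hdiv : ((r : ℕ) + b * (q : ℕ)) / b = (q : ℕ) := by
      rw [Nat.add_mul_div_left _ _ hb0, Nat.div_eq_of_lt r.isLt, Nat.zero_add]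
    rw [hv, hmod, hdiv, mul_pow, div_pow, ← pow_mul, ← pow_mul, Nat.mul_comm (r:ℕ) 2]
  simp only [key2]
  have hfac : ∀ q : Fin k, ∑ r : Fin b, (l ^ 2) ^ (r : ℕ) * ((1 - l ^ (b * ((q : ℕ) + 1))) ^ 2 / (1 - l ^ b) ^ 2)
      = (∑ r : Fin b, (l ^ 2) ^ (r : ℕ)) * ((1 - l ^ (b * ((q : ℕ) + 1))) ^ 2 / (1 - l ^ b) ^ 2) := by
    intro q; rw [Finset.sum_mul]
  simp only [hfac]
  rw [← Finset.mul_sum]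
  have hgeo : (∑ r : Fin b, (l ^ 2) ^ (r : ℕ)) = (1 - l ^ (2*b)) / (1 - l ^ 2) := by
    rw [Fin.sum_univ_eq_sum_range, geom_sum_eq hl2, ← pow_mul,
      ← neg_div_neg_eq, neg_sub, neg_sub]
  rw [hgeo]
  have hreidx : (∑ q : Fin k, (1 - l ^ (b * ((q : ℕ) + 1))) ^ 2 / (1 - l ^ b) ^ 2)
      = (∑ j ∈ Finset.Icc 1 k, (1 - l ^ (b * j)) ^ 2) / (1 - l ^ b) ^ 2 := by
    rw [Fin.sum_univ_eq_sum_range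
        (fun q => (1 - l ^ (b * (q + 1))) ^ 2 / (1 - l ^ b) ^ 2) k,
      ← Finset.Ico_add_one_right_eq_Icc, Finset.sum_Ico_eq_sum_range, Finset.sum_div]
    simp [Nat.add_comm]
  rw [hreidx]
  have h1 : (1 - l ^ 2) ≠ 0 := sub_ne_zero.mpr (Ne.symm hl2)
  have h2 : (1 - l ^ b) ≠ 0 := sub_ne_zero.mpr (Ne.symm hlb)
  field_simp
end

section
/- For every integer n ≥ 1 and every λ ∈ [0,1), the maximum squared row Euclidean norm of the matrix A C_λ^{-1} equals 1 + (1 − λ)²(n − 1); that is, ‖A C_λ^{-1}‖_{2→∞}² = 1 + (1 − λ)²(n − 1). -/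
open Finset

lemma sum_ind (n m : ℕ) (c : ℝ) :
    (∑ k : Fin n, if (k : ℕ) = m then c else 0) = if m < n then c else 0 := by
  split_ifs with h
  · rw [Finset.sum_eq_single (⟨m, h⟩ : Fin n)]
    · simp
    · intro k _ hk
      simp only [ite_eq_right_iff]
      intro hkm; exact absurd (Fin.ext hkm) hk
    · simp
  · apply Finset.sum_eq_zero
    intro k _
    have : (k : ℕ) ≠ m := by omega
    simp [this]

lemma entry (n : ℕ) (l : ℝ) (i j : Fin n) :
    (Amat n * Cinvmat n l) i j
    = (if (j : ℕ) ≤ (i : ℕ) then 1 else 0) + (if (j : ℕ) + 1 ≤ (i : ℕ) then -l else 0) := by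
  rw [Matrix.mul_apply]
  have hform : ∀ k : Fin n,
      Amat n i k * Cinvmat n l k j
      = (if (k : ℕ) = (j : ℕ) then (if (j : ℕ) ≤ (i : ℕ) then (1:ℝ) else 0) else 0)
        + (if (k : ℕ) = (j : ℕ) + 1 then (if (j : ℕ) + 1 ≤ (i : ℕ) then -l else 0) else 0) := by
    intro k
    simp only [Amat, Cinvmat]
    split_ifs <;> ring_nf <;> omega
  rw [Finset.sum_congr rfl (fun k _ => hform k), Finset.sum_add_distrib, sum_ind, sum_ind]
  have hj : (j : ℕ) < n := j.isLt
  have hi : (i : ℕ) < n := i.isLt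
  simp only [if_pos hj]
  congr 1
  split_ifs with h1 h2 <;> first | rfl | omega

lemma row_sq (n : ℕ) (l : ℝ) (i : Fin n) :
    ∑ j : Fin n, ((Amat n * Cinvmat n l) i j) ^ 2 = 1 + (i : ℕ) * (1 - l) ^ 2 := by
  have h : ∀ j : Fin n, ((Amat n * Cinvmat n l) i j) ^ 2
      = (if (j : ℕ) = (i : ℕ) then (1:ℝ) else 0)
        + (if (j : ℕ) < (i : ℕ) then (1 - l) ^ 2 else 0) := by
    intro j
    rw [entry]
    split_ifs <;> ring_nf <;> omega
  rw [Finset.sum_congr rfl (fun j _ => h j), Finset.sum_add_distrib, sum_ind,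
    if_pos i.isLt]
  congr 1
  rw [Fin.sum_univ_eq_sum_range (fun j => if j < (i : ℕ) then (1 - l) ^ 2 else 0)]
  rw [← Finset.sum_subset (Finset.range_subset_range.2 i.isLt.le)
    (by intro x _ hx; simp only [Finset.mem_range] at hx; rw [if_neg hx])]
  rw [Finset.sum_congr rfl (fun x hx => if_pos (Finset.mem_range.1 hx)),
    Finset.sum_const, Finset.card_range, nsmul_eq_mul]

/-- the maximum squared row Euclidean norm of A C_λ⁻¹ equals
1 + (1 − λ)²(n − 1). -/
theorem stmt_3 (n : ℕ) (hn : 1 ≤ n) (l : ℝ) (hl : l ∈ Set.Ico (0 : ℝ) 1) :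
    (rowMax (Amat n * Cinvmat n l)) ^ 2 = 1 + (1 - l) ^ 2 * ((n : ℝ) - 1) := by
  have : Nonempty (Fin n) := ⟨⟨0, by omega⟩⟩
  have hnn : ∀ i : Fin n, (0:ℝ) ≤ 1 + (i : ℕ) * (1 - l) ^ 2 := fun i => by positivity
  have hrow : ∀ i : Fin n, norm2 (fun j => (Amat n * Cinvmat n l) i j)
      = Real.sqrt (1 + (i : ℕ) * (1 - l) ^ 2) := by
    intro i; rw [norm2, row_sq]
  have hlast : (n - 1 : ℕ) < n := by omega
  set last : Fin n := ⟨n - 1, hlast⟩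
  have hsup : rowMax (Amat n * Cinvmat n l) = Real.sqrt (1 + ((n:ℝ) - 1) * (1 - l) ^ 2) := by
    have hcast : ((n - 1 : ℕ) : ℝ) = (n : ℝ) - 1 := by
      rw [Nat.cast_sub hn, Nat.cast_one]
    have key : ∀ i : Fin n, norm2 (fun j => (Amat n * Cinvmat n l) i j)
        ≤ Real.sqrt (1 + ((n:ℝ) - 1) * (1 - l) ^ 2) := by
      intro i
      rw [hrow]
      apply Real.sqrt_le_sqrt
      have : ((i : ℕ) : ℝ) ≤ (n : ℝ) - 1 := by
        rw [← hcast]; exact_mod_cast Nat.le_sub_one_of_lt i.isLt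
      nlinarith [sq_nonneg (1 - l)]
    apply le_antisymm
    · exact ciSup_le key
    · have := le_ciSup (f := fun i : Fin n => norm2 (fun j => (Amat n * Cinvmat n l) i j))
        ⟨_, Set.forall_mem_range.2 key⟩ last
      rw [hrow last, hcast] at this
      exact this
  rw [rowMax] at hsup
  rw [rowMax, hsup, Real.sq_sqrt (by nlinarith [sq_nonneg (1 - l), (Nat.one_le_cast (α := ℝ)).2 hn])]
  ring
end

section
/- Let n ≥ 1, let A be the n×n prefix-sum matrix, and let C_diag be the n×n diagonal matrix with j-th diagonal entry (n − j + 1)^{1/4} for j = 1,…,n. Then the full-batch RMSE of the factorization A = (A C_diag^{-1}) C_diag equals (1/√n) ∑_{j=1}^{n} √j; that is, (1/√n) · ‖A C_diag^{-1}‖_F · ‖C_diag e‖₂ = (1/√n) ∑_{j=1}^{n} √j, asymptotically equivalent to 2n/3. -/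
open Finset

/-- The optimal diagonal strategy matrix with j-th diagonal entry (n − j + 1)^{1/4}
(1-indexed; with Fin-index j this is (n − j)^{1/4}). -/
noncomputable def Cdiag (n : ℕ) : Matrix (Fin n) (Fin n) ℝ :=
  Matrix.diagonal (fun j : Fin n => ((n - (j : ℕ) : ℕ) : ℝ) ^ ((1 : ℝ) / 4))

/-! Column `j` (0-indexed) of the prefix-sum matrix has `n - j` ones and gets scaled by
`(n - j)^{-1/4}`, while `C_diag e` has entries `(n - j)^{1/4}`; so `‖A C_diag⁻¹‖_F²` and
`‖C_diag e‖²` both equal `∑_{m=1}^n √m`. That sum is squeezed between `F n` and `F n + √n` for the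
antiderivative `F x = (2/3) x^{3/2}` of `√x`, because each increment `F (m + 1) - F m` lies
between `√m` and `√(m + 1)`. -/

open Matrix

lemma Matrix.inv_diagonal_of_ne_zero {ι K : Type*} [Fintype ι] [DecidableEq ι] [Field K]
    {d : ι → K} (hd : ∀ i, d i ≠ 0) : (diagonal d)⁻¹ = diagonal d⁻¹ :=
  inv_eq_right_inv <| by
    rw [diagonal_mul_diagonal, ← diagonal_one]
    exact congrArg diagonal (funext fun i => mul_inv_cancel₀ (hd i))

lemma Fin.sum_univ_tsub_eq_sum_Icc {M : Type*} [AddCommMonoid M] (n : ℕ) (f : ℕ → M) :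
    ∑ j : Fin n, f (n - j) = ∑ m ∈ Icc 1 n, f m := by
  rw [Fin.sum_univ_eq_sum_range (fun j => f (n - j)), ← sum_range_reflect,
    ← Ico_add_one_right_eq_Icc, sum_Ico_eq_sum_range]
  refine sum_congr rfl fun j hj => congrArg f ?_
  have := mem_range.mp hj
  omega

lemma frob_Amat_mul_diagonal {n : ℕ} (d : Fin n → ℝ) :
    frob (Amat n * diagonal d) = √(∑ j : Fin n, ((n - j : ℕ) : ℝ) * d j ^ 2) := by
  have hcolumn (j : Fin n) :
      ∑ i, (Amat n * diagonal d) i j ^ 2 = ((n - j : ℕ) : ℝ) * d j ^ 2 := by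
    simp only [mul_diagonal, Amat, ite_mul, one_mul, zero_mul, ite_pow, sq (0 : ℝ), mul_zero]
    rw [← sum_filter, sum_const, nsmul_eq_mul, ← Fin.card_Ici]
    congr 3
    ext i
    simp
  rw [frob, sum_comm]
  simp only [hcolumn]

lemma norm2_diagonal_mulVec_one {n : ℕ} (d : Fin n → ℝ) :
    norm2 (diagonal d *ᵥ fun _ => 1) = √(∑ j, d j ^ 2) := by
  simp only [norm2, mulVec_diagonal, mul_one]

lemma Cdiag_inv (n : ℕ) :
    (Cdiag n)⁻¹ = diagonal fun j : Fin n => ((n - j : ℕ) : ℝ) ^ (-(1 / 4) : ℝ) := by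
  have hpos (j : Fin n) : (0 : ℝ) < (n - j : ℕ) := by
    exact_mod_cast Nat.sub_pos_of_lt j.isLt
  rw [Cdiag, inv_diagonal_of_ne_zero fun j => (Real.rpow_pos_of_pos (hpos j) _).ne']
  exact congrArg diagonal (funext fun j => (Real.rpow_neg (hpos j).le _).symm)

lemma Real.rpow_quarter_sq {t : ℝ} (ht : 0 ≤ t) : (t ^ (1 / 4 : ℝ)) ^ 2 = √t := by
  rw [← rpow_natCast, ← rpow_mul ht, sqrt_eq_rpow]
  norm_num

lemma Real.mul_rpow_neg_quarter_sq {t : ℝ} (ht : 0 ≤ t) : t * (t ^ (-(1 / 4) : ℝ)) ^ 2 = √t := by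
  rcases ht.eq_or_lt with rfl | ht
  · simp
  rw [← rpow_natCast, ← rpow_mul ht.le, ← rpow_one_add' ht.le (by norm_num), sqrt_eq_rpow]
  norm_num

lemma rmse_Cdiag (n : ℕ) :
    (1 / √n) * frob (Amat n * (Cdiag n)⁻¹) * norm2 ((Cdiag n).mulVec (fun _ => 1)) =
      (1 / √n) * ∑ m ∈ Icc 1 n, √m := by
  have hsum : ∑ j : Fin n, √((n - j : ℕ) : ℝ) = ∑ m ∈ Icc 1 n, √m :=
    Fin.sum_univ_tsub_eq_sum_Icc n fun m => √m
  have hfrob : frob (Amat n * (Cdiag n)⁻¹) = √(∑ m ∈ Icc 1 n, √m) := by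
    simp only [Cdiag_inv, frob_Amat_mul_diagonal, Real.mul_rpow_neg_quarter_sq (Nat.cast_nonneg _),
      hsum]
  have hnorm : norm2 ((Cdiag n).mulVec (fun _ => 1)) = √(∑ m ∈ Icc 1 n, √m) := by
    simp only [Cdiag, norm2_diagonal_mulVec_one, Real.rpow_quarter_sq (Nat.cast_nonneg _), hsum]
  rw [hfrob, hnorm, mul_assoc, Real.mul_self_sqrt (sum_nonneg fun m _ => Real.sqrt_nonneg _)]

noncomputable def sqrtAntideriv (x : ℝ) : ℝ := 2 / 3 * √x ^ 3

lemma sqrtAntideriv_succ_sub_mem_Icc (n : ℕ) :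
    sqrtAntideriv (n + 1) - sqrtAntideriv n ∈ Set.Icc √n √(n + 1) := by
  have hx := Real.sq_sqrt n.cast_nonneg
  have hy := Real.sq_sqrt (by positivity : (0 : ℝ) ≤ n + 1)
  have hxy : √(n : ℝ) ≤ √(n + 1) := Real.sqrt_le_sqrt (by linarith)
  unfold sqrtAntideriv
  constructor <;> nlinarith [Real.sqrt_nonneg n, sq_nonneg (√(n + 1 : ℝ) - √n)]

lemma sqrtAntideriv_le_sum_sqrt (n : ℕ) : sqrtAntideriv n ≤ ∑ m ∈ Icc 1 n, √m := by
  induction n with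
  | zero => simp [sqrtAntideriv]
  | succ n ih =>
    rw [sum_Icc_succ_top (by omega), Nat.cast_succ]
    linarith [(sqrtAntideriv_succ_sub_mem_Icc n).2]

lemma sum_sqrt_le_sqrtAntideriv_add_sqrt (n : ℕ) :
    ∑ m ∈ Icc 1 n, √m ≤ sqrtAntideriv n + √n := by
  induction n with
  | zero => simp [sqrtAntideriv]
  | succ n ih =>
    rw [sum_Icc_succ_top (by omega), Nat.cast_succ]
    linarith [(sqrtAntideriv_succ_sub_mem_Icc n).1]

lemma tendsto_sum_sqrt_div_two_thirds :
    Filter.Tendsto (fun n : ℕ => ((1 / √n) * ∑ m ∈ Icc 1 n, √m) / (2 * (n : ℝ) / 3))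
      Filter.atTop (nhds 1) := by
  have hlim : Filter.Tendsto (fun n : ℕ => 1 + 3 / 2 / (n : ℝ)) Filter.atTop (nhds 1) := by
    simpa using (tendsto_const_div_atTop_nhds_zero_nat (3 / 2 : ℝ)).const_add 1
  refine tendsto_of_tendsto_of_tendsto_of_le_of_le' tendsto_const_nhds hlim ?_ ?_ <;>
    filter_upwards [Filter.eventually_gt_atTop 0] with n hn0
  all_goals
    have hn : (0 : ℝ) < n := by exact_mod_cast hn0
    have hs : 0 < √(n : ℝ) := Real.sqrt_pos.mpr hn
    have hcube : (n : ℝ) * √n = √n ^ 3 := by rw [pow_succ, Real.sq_sqrt hn.le]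
    have hlower := sqrtAntideriv_le_sum_sqrt n
    have hupper := sum_sqrt_le_sqrtAntideriv_add_sqrt n
    unfold sqrtAntideriv at hlower hupper
  · rw [le_div_iff₀ (by positivity), one_mul, one_div_mul_eq_div, le_div_iff₀ hs]
    linarith
  · rw [div_le_iff₀ (by positivity), one_div_mul_eq_div, div_le_iff₀ hs]
    have hrhs : (1 + 3 / 2 / (n : ℝ)) * (2 * n / 3) * √n = 2 / 3 * √n ^ 3 + √n := by
      rw [← hcube]
      field_simp
    linarith

/-- the full-batch RMSE of the factorization A = (A C_diag⁻¹) C_diag equals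
(1/√n) ∑_{j=1}^{n} √j, which is asymptotically equivalent to 2n/3. -/
theorem stmt_7 :
    (∀ n : ℕ, 1 ≤ n →
      (1 / Real.sqrt n) * frob (Amat n * (Cdiag n)⁻¹) *
        norm2 ((Cdiag n).mulVec (fun _ => 1)) =
      (1 / Real.sqrt n) * ∑ j ∈ Finset.Icc 1 n, Real.sqrt j) ∧
    Filter.Tendsto
      (fun n : ℕ => ((1 / Real.sqrt n) * ∑ j ∈ Finset.Icc 1 n, Real.sqrt j) /
        (2 * (n : ℝ) / 3))
      Filter.atTop (nhds 1) :=
  ⟨fun n _ => rmse_Cdiag n, tendsto_sum_sqrt_div_two_thirds⟩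
end

section
/- Let n ≥ 1 and let A be the n×n prefix-sum matrix. The infimum over all factorizations A = BC (B, C real n×n matrices, C invertible) of ‖B‖_F · ‖Ce‖₂ equals ‖Ae‖₂ = √(n(n+1)(2n+1)/6); that is, for every ε > 0 there exist an invertible real n×n matrix C and B = AC^{-1} such that ‖B‖_F · ‖Ce‖₂ < ‖Ae‖₂ + ε, and no factorization achieves a smaller value than ‖Ae‖₂. (A minimizing sequence is given by C_μ = D_μ^{-1} R A and B_μ = Rᵀ D_μ, where R is a rotation with R(Ae) = ‖Ae‖₂·e₁, D_μ = diag(1, μ, …, μ), and μ → 0.) -/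
open Finset

/-! Since `A e = B (C e)`, Cauchy–Schwarz applied row by row gives `‖A e‖₂ ≤ ‖B‖_F ‖C e‖₂`.
Conversely, with `w = A e` and `w k ≠ 0`, let `B_μ` be `μ • 1` with its `k`-th column replaced
by `w`. Then `det B_μ = μ ^ (n - 1) w k`, and `C_μ = B_μ⁻¹ A` sends `e` to the unit vector `e_k`,
so the product is `‖B_μ‖_F ≤ √(‖w‖₂² + n μ²)`, which tends to `‖w‖₂` as `μ → 0`. -/

open Matrix Filter Topology

lemma norm2_mulVec_le_frob_mul {n : ℕ} (M : Matrix (Fin n) (Fin n) ℝ) (x : Fin n → ℝ) :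
    norm2 (M *ᵥ x) ≤ frob M * norm2 x := by
  rw [norm2, norm2, frob, ← Real.sqrt_mul (by positivity), Finset.sum_mul]
  gcongr with i
  simpa [mulVec, dotProduct] using Finset.sum_mul_sq_le_sq_mul_sq univ (M i) x

lemma norm2_single_one {n : ℕ} (k : Fin n) : norm2 (Pi.single k (1 : ℝ)) = 1 := by
  simp [norm2, Pi.single_apply]

lemma det_updateCol_smul_one {n : ℕ} (μ : ℝ) (k : Fin n) (w : Fin n → ℝ) :
    ((μ • (1 : Matrix (Fin n) (Fin n) ℝ)).updateCol k w).det = μ ^ (n - 1) * w k := by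
  have h := det_updateCol_sum (1 : Matrix (Fin n) (Fin n) ℝ) k w
  simp only [smul_eq_mul, one_apply, mul_ite, mul_one, mul_zero, Finset.sum_ite_eq,
    Finset.mem_univ, if_true, det_one] at h
  rw [det_updateCol_smul_left, Fintype.card_fin, h]

lemma frob_updateCol_smul_one_le {n : ℕ} (μ : ℝ) (k : Fin n) (w : Fin n → ℝ) :
    frob ((μ • (1 : Matrix (Fin n) (Fin n) ℝ)).updateCol k w) ≤
      Real.sqrt (norm2 w ^ 2 + n * μ ^ 2) := by
  have hentry : ∀ i j, ((μ • (1 : Matrix (Fin n) (Fin n) ℝ)).updateCol k w) i j ^ 2 ≤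
      (if j = k then w i ^ 2 else 0) + (if i = j then μ ^ 2 else 0) := by
    intro i j
    simp only [updateCol_apply, Matrix.smul_apply, one_apply, smul_eq_mul]
    split_ifs <;> simp [sq_nonneg]
  rw [frob, norm2, Real.sq_sqrt (by positivity)]
  gcongr
  calc _ ≤ ∑ i, ∑ j, ((if j = k then w i ^ 2 else 0) + (if i = j then μ ^ 2 else 0)) := by
        gcongr with i _ j; exact hentry i j
    _ = _ := by simp [Finset.sum_add_distrib]

theorem exists_isUnit_frob_mul_inv_mul_norm2_lt {n : ℕ} {A : Matrix (Fin n) (Fin n) ℝ}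
    (hA : IsUnit A) {x : Fin n → ℝ} (hx : x ≠ 0) {ε : ℝ} (hε : 0 < ε) :
    ∃ C : Matrix (Fin n) (Fin n) ℝ, IsUnit C ∧
      frob (A * C⁻¹) * norm2 (C *ᵥ x) < norm2 (A *ᵥ x) + ε := by
  set w := A *ᵥ x with hw
  obtain ⟨k, hk⟩ : ∃ k, w k ≠ 0 := Function.ne_iff.mp fun h =>
    hx (mulVec_injective_iff_isUnit.mpr hA (h.trans (mulVec_zero A).symm))
  have hlim : Tendsto (fun μ : ℝ => Real.sqrt (norm2 w ^ 2 + n * μ ^ 2)) (𝓝[≠] 0)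
      (𝓝 (norm2 w)) := by
    refine (Continuous.tendsto' (by fun_prop) 0 _ ?_).mono_left nhdsWithin_le_nhds
    simp [norm2, Real.sqrt_nonneg]
  obtain ⟨μ, hlt, hμ⟩ :=
    ((hlim.eventually (gt_mem_nhds (lt_add_of_pos_right _ hε))).and self_mem_nhdsWithin).exists
  set B := (μ • (1 : Matrix (Fin n) (Fin n) ℝ)).updateCol k w
  have hB : IsUnit B := by
    rw [isUnit_iff_isUnit_det, det_updateCol_smul_one]
    exact (pow_ne_zero _ hμ).isUnit.mul hk.isUnit
  have hAC : A * (B⁻¹ * A)⁻¹ = B := by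
    rw [Matrix.mul_inv_rev, nonsing_inv_nonsing_inv B ((isUnit_iff_isUnit_det B).mp hB),
      mul_nonsing_inv_cancel_left _ _ ((isUnit_iff_isUnit_det A).mp hA)]
  have hCx : (B⁻¹ * A) *ᵥ x = Pi.single k 1 := by
    have hBk : B *ᵥ Pi.single k 1 = w := by ext i; simp [B]
    rw [← mulVec_mulVec, ← hw, ← hBk, mulVec_mulVec,
      nonsing_inv_mul _ ((isUnit_iff_isUnit_det B).mp hB), one_mulVec]
  refine ⟨B⁻¹ * A, (isUnit_nonsing_inv_iff.mpr hB).mul hA, ?_⟩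
  rw [hAC, hCx, norm2_single_one, mul_one]
  exact (frob_updateCol_smul_one_le μ k w).trans_lt hlt

lemma isUnit_Amat (n : ℕ) : IsUnit (Amat n) := by
  rw [isUnit_iff_isUnit_det, det_of_isLowerTriangular]
  · simp [Amat]
  · intro i j hij
    simp [Amat, not_le.mpr (show i < j from hij)]

lemma Amat_mulVec_one (n : ℕ) : Amat n *ᵥ (fun _ => 1) = fun i : Fin n => ((i : ℕ) : ℝ) + 1 := by
  ext i
  simp [Amat, mulVec, dotProduct, Finset.sum_boole, filter_ge_eq_Iic]

lemma sum_range_succ_sq (n : ℕ) :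
    ∑ i ∈ range n, ((i : ℝ) + 1) ^ 2 = (n : ℝ) * (n + 1) * (2 * n + 1) / 6 := by
  induction n with
  | zero => simp
  | succ m ih => rw [sum_range_succ, ih]; push_cast; ring

lemma norm2_Amat_mulVec_one (n : ℕ) :
    norm2 (Amat n *ᵥ fun _ => 1) = Real.sqrt ((n : ℝ) * ((n : ℝ) + 1) * (2 * (n : ℝ) + 1) / 6) := by
  rw [Amat_mulVec_one, norm2, ← sum_range_succ_sq,
    ← Fin.sum_univ_eq_sum_range (fun i => ((i : ℝ) + 1) ^ 2)]

/-- the infimum of ‖B‖_F·‖Ce‖₂ over factorizations A = BC (C invertible,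
B = A C⁻¹) equals ‖Ae‖₂ = √(n(n+1)(2n+1)/6): no factorization achieves a smaller value,
and for every ε > 0 some factorization comes within ε of it. -/
theorem stmt_9 (n : ℕ) (hn : 1 ≤ n) :
    (∀ B C : Matrix (Fin n) (Fin n) ℝ, B * C = Amat n →
      norm2 ((Amat n).mulVec (fun _ => 1)) ≤ frob B * norm2 (C.mulVec (fun _ => 1))) ∧
    (∀ ε : ℝ, 0 < ε → ∃ C : Matrix (Fin n) (Fin n) ℝ, IsUnit C ∧
      frob (Amat n * C⁻¹) * norm2 (C.mulVec (fun _ => 1)) <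
        norm2 ((Amat n).mulVec (fun _ => 1)) + ε) ∧
    norm2 ((Amat n).mulVec (fun _ => 1)) =
      Real.sqrt ((n : ℝ) * ((n : ℝ) + 1) * (2 * (n : ℝ) + 1) / 6) := by
  have hone : (fun _ => 1 : Fin n → ℝ) ≠ 0 := fun h => one_ne_zero (congrFun h ⟨0, hn⟩)
  refine ⟨fun B C hBC => ?_,
    fun ε hε => exists_isUnit_frob_mul_inv_mul_norm2_lt (isUnit_Amat n) hone hε,
    norm2_Amat_mulVec_one n⟩
  rw [← hBC, ← mulVec_mulVec]
  exact norm2_mulVec_le_frob_mul B _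
end

section
/- Let n ≥ 1 and let A be the n×n prefix-sum matrix. For every invertible real n×n matrix C, setting B = A C^{-1}, one has ‖B‖_{2→∞} · sup{‖Cx‖₂ : x ∈ ℝⁿ, ‖x‖_∞ ≤ 1} ≥ n, and equality is attained by the trivial factorization B = A, C = I. In words: in dimension d = 1, the trivial factorization is optimal among all factorizations for b = 1, k = n under the MaxSE metric. -/
open Finset

lemma norm2_nonneg' {n : ℕ} (v : Fin n → ℝ) : 0 ≤ norm2 v := Real.sqrt_nonneg _

/-- Cauchy–Schwarz. -/
lemma cs_aux {n : ℕ} (f g : Fin n → ℝ) : ∑ i, f i * g i ≤ norm2 f * norm2 g := by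
  have h := Finset.sum_mul_sq_le_sq_mul_sq Finset.univ f g
  calc ∑ i, f i * g i ≤ |∑ i, f i * g i| := le_abs_self _
    _ = Real.sqrt ((∑ i, f i * g i) ^ 2) := (Real.sqrt_sq_eq_abs _).symm
    _ ≤ Real.sqrt ((∑ i, f i ^ 2) * (∑ i, g i ^ 2)) := Real.sqrt_le_sqrt h
    _ = norm2 f * norm2 g := Real.sqrt_mul (by positivity) _

lemma norm2_mono {n : ℕ} {u v : Fin n → ℝ} (h : ∀ i, u i ^ 2 ≤ v i ^ 2) :
    norm2 u ≤ norm2 v :=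
  Real.sqrt_le_sqrt (Finset.sum_le_sum fun i _ => h i)

lemma bdd_sup {n : ℕ} (C : Matrix (Fin n) (Fin n) ℝ) :
    BddAbove (Set.range fun x : {x : Fin n → ℝ // ∀ i, |x i| ≤ 1} =>
      norm2 (C.mulVec x.1)) := by
  refine ⟨norm2 (fun i => ∑ j, |C i j|), ?_⟩
  rintro _ ⟨⟨x, hx⟩, rfl⟩
  refine norm2_mono fun i => ?_
  have h1 : |C.mulVec x i| ≤ ∑ j, |C i j| := by
    rw [Matrix.mulVec, dotProduct]
    refine (Finset.abs_sum_le_sum_abs (fun j => C i j * x j) Finset.univ).trans (Finset.sum_le_sum fun j _ => ?_)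
    rw [abs_mul]
    calc |C i j| * |x j| ≤ |C i j| * 1 := by
          exact mul_le_mul_of_nonneg_left (hx j) (abs_nonneg _)
      _ = |C i j| := mul_one _
  have h2 : 0 ≤ ∑ j, |C i j| := Finset.sum_nonneg fun j _ => abs_nonneg _
  calc (Matrix.mulVec C x i) ^ 2 = |C.mulVec x i| ^ 2 := (sq_abs _).symm
    _ ≤ (∑ j, |C i j|) ^ 2 := by exact pow_le_pow_left₀ (abs_nonneg _) h1 2

/-- in dimension d = 1 with full-batch participation (b = 1, k = n), for
every invertible C and B = A C⁻¹ we have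
‖B‖_{2→∞} · sup{‖Cx‖₂ : ‖x‖_∞ ≤ 1} ≥ n, with equality for B = A, C = I. -/
theorem stmt_11 (n : ℕ) (hn : 1 ≤ n) :
    (∀ C : Matrix (Fin n) (Fin n) ℝ, IsUnit C →
      (n : ℝ) ≤ rowMax (Amat n * C⁻¹) *
        ⨆ x : {x : Fin n → ℝ // ∀ i, |x i| ≤ 1}, norm2 (C.mulVec x.1)) ∧
    rowMax (Amat n) *
      (⨆ x : {x : Fin n → ℝ // ∀ i, |x i| ≤ 1},
        norm2 ((1 : Matrix (Fin n) (Fin n) ℝ).mulVec x.1)) = (n : ℝ) := by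
  haveI : NeZero n := ⟨Nat.one_le_iff_ne_zero.mp hn⟩
  haveI : Nonempty {x : Fin n → ℝ // ∀ i, |x i| ≤ 1} :=
    ⟨⟨fun _ => 1, fun i => by norm_num⟩⟩
  have one1 : ((fun _ => (1:ℝ)) : Fin n → ℝ) ∈ {x : Fin n → ℝ | ∀ i, |x i| ≤ 1} :=
    fun i => by norm_num
  set last : Fin n := ⟨n - 1, Nat.sub_lt hn one_pos⟩ with hlast
  have hlastle : ∀ j : Fin n, (j : ℕ) ≤ (last : ℕ) := fun j =>
    Nat.le_sub_one_of_lt j.2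
  have bddRow : ∀ B : Matrix (Fin n) (Fin n) ℝ,
      BddAbove (Set.range fun i : Fin n => norm2 (fun j => B i j)) := fun B =>
    (Set.finite_range _).bddAbove
  constructor
  · intro C hC
    have hdet : IsUnit C.det := (Matrix.isUnit_iff_isUnit_det C).mp hC
    have hBC : (Amat n * C⁻¹) * C = Amat n := by
      rw [Matrix.mul_assoc, Matrix.nonsing_inv_mul C hdet, Matrix.mul_one]
    set B := Amat n * C⁻¹ with hB
    -- key identity: n = ∑_k B last k * (C.mulVec 1) k
    have hkey : (n : ℝ) = ∑ k, B last k * (C.mulVec (fun _ => 1)) k := by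
      have h1 : (n : ℝ) = ∑ j, (Amat n) last j := by
        simp only [Amat]
        rw [Finset.sum_congr rfl (fun j _ => if_pos (hlastle j))]
        simp
      rw [h1, ← hBC]
      simp only [Matrix.mul_apply, Matrix.mulVec]
      rw [Finset.sum_comm]
      simp [dotProduct, Finset.mul_sum]
    have hcs : (n : ℝ) ≤ norm2 (fun k => B last k) * norm2 (C.mulVec (fun _ => 1)) := by
      rw [hkey]; exact cs_aux _ _
    have h2 : norm2 (fun k => B last k) ≤ rowMax B :=
      le_ciSup (bddRow B) last
    have h3 : norm2 (C.mulVec (fun _ => 1)) ≤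
        ⨆ x : {x : Fin n → ℝ // ∀ i, |x i| ≤ 1}, norm2 (C.mulVec x.1) :=
      le_ciSup (bdd_sup C) ⟨fun _ => 1, one1⟩
    calc (n : ℝ) ≤ norm2 (fun k => B last k) * norm2 (C.mulVec (fun _ => 1)) := hcs
      _ ≤ rowMax B * ⨆ x : {x : Fin n → ℝ // ∀ i, |x i| ≤ 1}, norm2 (C.mulVec x.1) := by
          apply mul_le_mul h2 h3 (norm2_nonneg' _)
          exact le_trans (norm2_nonneg' _) h2
  · -- equality case
    have hA : rowMax (Amat n) = Real.sqrt n := by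
      apply le_antisymm
      · apply ciSup_le
        intro i
        apply Real.sqrt_le_sqrt
        calc ∑ j, (Amat n i j) ^ 2 ≤ ∑ _j : Fin n, (1:ℝ) := by
              refine Finset.sum_le_sum fun j _ => ?_
              simp only [Amat]
              split <;> norm_num
          _ = n := by simp
      · have := le_ciSup (bddRow (Amat n)) last
        refine le_trans (le_of_eq ?_) this
        unfold norm2
        congr 1
        rw [Finset.sum_congr rfl (fun j _ => by
          simp only [Amat, if_pos (hlastle j), one_pow] : ∀ j ∈ Finset.univ, (Amat n last j)^2 = 1)]
        simp
    have hS : (⨆ x : {x : Fin n → ℝ // ∀ i, |x i| ≤ 1},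
        norm2 ((1 : Matrix (Fin n) (Fin n) ℝ).mulVec x.1)) = Real.sqrt n := by
      apply le_antisymm
      · apply ciSup_le
        rintro ⟨x, hx⟩
        rw [Matrix.one_mulVec]
        apply Real.sqrt_le_sqrt
        calc ∑ i, x i ^ 2 ≤ ∑ _i : Fin n, (1:ℝ) := by
              refine Finset.sum_le_sum fun i _ => ?_
              calc x i ^ 2 = |x i| ^ 2 := (sq_abs _).symm
                _ ≤ 1 ^ 2 := pow_le_pow_left₀ (abs_nonneg _) (hx i) 2
                _ = 1 := one_pow 2
          _ = n := by simp
      · have := le_ciSup (bdd_sup (1 : Matrix (Fin n) (Fin n) ℝ)) ⟨fun _ => 1, one1⟩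
        refine le_trans (le_of_eq ?_) this
        rw [Matrix.one_mulVec]
        unfold norm2
        simp
    rw [hA, hS, Real.mul_self_sqrt (Nat.cast_nonneg n)]
end

section
/- Let n ≥ 1. In the full-batch regime (b = 1, k = n), the trivial factorization λ = 0 is optimal within the DP-λCGD family under both the MaxSE and RMSE metrics: for every λ ∈ [0,1), ‖A C_λ^{-1}‖_{2→∞} · ‖C_λ e‖₂ ≥ ‖A‖_{2→∞} · ‖e‖₂ = n, and (1/√n)·‖A C_λ^{-1}‖_F · ‖C_λ e‖₂ ≥ (1/√n)·‖A‖_F·‖e‖₂ = √(n(n+1)/2). -/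
open Finset

/- ### Auxiliary lemmas -/

lemma sum_fin_le' (n : ℕ) (i : Fin n) (f : ℕ → ℝ) :
    (∑ j : Fin n, if (j:ℕ) ≤ (i:ℕ) then f j else 0) = ∑ j ∈ Finset.range ((i:ℕ)+1), f j := by
  rw [Fin.sum_univ_eq_sum_range (fun j => if j ≤ (i:ℕ) then f j else 0) n]
  rw [← Finset.sum_subset (Finset.range_subset_range.mpr (by omega : (i:ℕ)+1 ≤ n))
    (fun x _ hx => by rw [if_neg]; simp [Finset.mem_range] at hx ⊢; omega)]
  exact Finset.sum_congr rfl fun x hx => by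
    rw [if_pos]; simp [Finset.mem_range] at hx; omega

lemma sum_fin_lt' (n : ℕ) (i : Fin n) (x : ℝ) :
    (∑ j : Fin n, if (j:ℕ) < (i:ℕ) then x else 0) = (i:ℕ) * x := by
  rw [Fin.sum_univ_eq_sum_range (fun j => if j < (i:ℕ) then x else 0) n]
  rw [← Finset.sum_subset (Finset.range_subset_range.mpr i.isLt.le)
    (fun y _ hy => by rw [if_neg]; simp [Finset.mem_range] at hy ⊢; omega)]
  rw [Finset.sum_congr rfl (fun y hy => by rw [if_pos]; simpa [Finset.mem_range] using hy)]
  simp [mul_comm]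

lemma sum_fin_single' (n m : ℕ) (hm : m < n) (a : ℝ) :
    (∑ j : Fin n, if (j:ℕ) = m then a else 0) = a := by
  have h : ∀ j : Fin n, (if (j:ℕ) = m then a else 0) = (if j = (⟨m, hm⟩ : Fin n) then a else 0) :=
    fun j => by simp [Fin.ext_iff]
  simp only [h]
  rw [Finset.sum_ite_eq' Finset.univ (⟨m, hm⟩ : Fin n) (fun _ => a)]
  simp

lemma gauss1 (n : ℕ) : ∑ i ∈ Finset.range n, ((i:ℝ)+1) = n * (n+1) / 2 := by
  induction n with
  | zero => simp
  | succ m ih => rw [Finset.sum_range_succ, ih]; push_cast; ring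

lemma gauss2 (n : ℕ) : ∑ i ∈ Finset.range n, (i:ℝ) = n * ((n:ℝ)-1) / 2 := by
  induction n with
  | zero => simp
  | succ m ih => rw [Finset.sum_range_succ, ih]; push_cast; ring

lemma Bentry (n : ℕ) (l : ℝ) (i j : Fin n) :
    (Amat n * Cinvmat n l) i j =
      if (j:ℕ) = (i:ℕ) then 1 else if (j:ℕ) < (i:ℕ) then 1 - l else 0 := by
  rw [Matrix.mul_apply]
  have key : ∀ k : Fin n, Amat n i k * Cinvmat n l k j =
      (if (k:ℕ) = (j:ℕ) then (if (j:ℕ) ≤ (i:ℕ) then (1:ℝ) else 0) else 0)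
      + (if (k:ℕ) = (j:ℕ)+1 then (if (j:ℕ)+1 ≤ (i:ℕ) then -l else 0) else 0) := by
    intro k
    simp only [Amat, Cinvmat]
    split_ifs <;> first | ring1 | (exfalso; omega)
  simp only [key, Finset.sum_add_distrib]
  rw [sum_fin_single' n (j:ℕ) j.isLt]
  have h2 : (∑ k : Fin n, if (k:ℕ) = (j:ℕ)+1 then (if (j:ℕ)+1 ≤ (i:ℕ) then -l else 0) else 0)
      = if (j:ℕ)+1 ≤ (i:ℕ) then -l else 0 := by
    by_cases hj : (j:ℕ)+1 < n
    · exact sum_fin_single' n ((j:ℕ)+1) hj _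
    · have : ¬ ((j:ℕ)+1 ≤ (i:ℕ)) := by have := i.isLt; omega
      simp only [this, if_false]
      exact Finset.sum_eq_zero fun k _ => by simp
  rw [h2]
  split_ifs <;> first | ring1 | (exfalso; omega)

/-- Squared norm of row `i` of `A C⁻¹`. -/
lemma Brow_sq (n : ℕ) (l : ℝ) (i : Fin n) :
    (∑ j : Fin n, ((Amat n * Cinvmat n l) i j) ^ 2) = 1 + (i:ℕ) * (1-l)^2 := by
  have key : ∀ j : Fin n, ((Amat n * Cinvmat n l) i j) ^ 2 =
      (if (j:ℕ) = (i:ℕ) then (1:ℝ) else 0) + (if (j:ℕ) < (i:ℕ) then (1-l)^2 else 0) := by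
    intro j
    rw [Bentry]
    split_ifs <;> first | ring1 | (exfalso; omega)
  simp only [key, Finset.sum_add_distrib]
  rw [sum_fin_single' n (i:ℕ) i.isLt, sum_fin_lt' n i]

/-- in the full-batch regime (b = 1, k = n), the trivial factorization
λ = 0 is optimal within the DP-λCGD family under both MaxSE and RMSE:
‖A‖_{2→∞}·‖e‖₂ = n, (1/√n)‖A‖_F‖e‖₂ = √(n(n+1)/2), and for every λ ∈ [0,1) the
corresponding quantities for C_λ are at least these values. -/
theorem stmt_12 (n : ℕ) (hn : 1 ≤ n) :
    rowMax (Amat n) * norm2 (fun _ : Fin n => (1 : ℝ)) = (n : ℝ) ∧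
    (1 / Real.sqrt n) * frob (Amat n) * norm2 (fun _ : Fin n => (1 : ℝ)) =
      Real.sqrt ((n : ℝ) * ((n : ℝ) + 1) / 2) ∧
    ∀ l ∈ Set.Ico (0 : ℝ) 1,
      (n : ℝ) ≤ rowMax (Amat n * Cinvmat n l) *
          norm2 ((Cmat n l).mulVec (fun _ => 1)) ∧
      Real.sqrt ((n : ℝ) * ((n : ℝ) + 1) / 2) ≤
        (1 / Real.sqrt n) * frob (Amat n * Cinvmat n l) *
          norm2 ((Cmat n l).mulVec (fun _ => 1)) := by
  have hne : Nonempty (Fin n) := ⟨⟨0, hn⟩⟩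
  have hlast : n - 1 < n := by omega
  have hnR : (0:ℝ) < n := by exact_mod_cast hn
  have hsn : Real.sqrt n ≠ 0 := by positivity
  -- norm2 of all-ones vector
  have hones : norm2 (fun _ : Fin n => (1:ℝ)) = Real.sqrt n := by
    simp [norm2]
  -- rows of Amat
  have hArow : ∀ i : Fin n, norm2 (fun j => Amat n i j) = Real.sqrt ((i:ℕ)+1) := by
    intro i
    unfold norm2
    congr 1
    have : ∀ j : Fin n, (Amat n i j)^2 = if (j:ℕ) ≤ (i:ℕ) then (1:ℝ) else 0 := by
      intro j; simp only [Amat]; split_ifs <;> norm_num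
    simp only [this]
    rw [sum_fin_le' n i (fun _ => 1)]
    simp
  have hAmax : rowMax (Amat n) = Real.sqrt n := by
    unfold rowMax
    apply le_antisymm
    · apply ciSup_le
      intro i
      rw [hArow i]
      exact Real.sqrt_le_sqrt (by exact_mod_cast i.isLt)
    · have := le_ciSup (f := fun i : Fin n => norm2 (fun j => Amat n i j)) (Set.Finite.bddAbove (Set.finite_range _)) (⟨n-1, hlast⟩ : Fin n)
      refine le_trans (le_of_eq ?_) this
      rw [hArow]
      congr 1
      rw [Nat.cast_sub hn]
      push_cast
      ring
  have hAfrob : frob (Amat n) = Real.sqrt ((n:ℝ) * ((n:ℝ)+1) / 2) := by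
    unfold frob
    congr 1
    have hr : ∀ i : Fin n, (∑ j : Fin n, (Amat n i j)^2) = (i:ℕ)+1 := by
      intro i
      have : ∀ j : Fin n, (Amat n i j)^2 = if (j:ℕ) ≤ (i:ℕ) then (1:ℝ) else 0 := by
        intro j; simp only [Amat]; split_ifs <;> norm_num
      simp only [this]
      rw [sum_fin_le' n i (fun _ => 1)]
      simp
    simp only [hr]
    rw [Fin.sum_univ_eq_sum_range (fun i => ((i:ℝ)+1)) n, gauss1]
  refine ⟨by rw [hAmax, hones, Real.mul_self_sqrt hnR.le], ?_, ?_⟩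
  · rw [hAfrob, hones]
    field_simp
  intro l hl
  obtain ⟨hl0, hl1⟩ := hl
  set u : ℝ := 1 - l with hu
  have hu0 : 0 < u := by simp [hu]; linarith
  -- the geometric-sum vector s
  set s : Fin n → ℝ := fun i => ∑ t ∈ Finset.range ((i:ℕ)+1), l^t with hs
  have hmv : ∀ i : Fin n, (Cmat n l).mulVec (fun _ => 1) i = s i := by
    intro i
    unfold Matrix.mulVec dotProduct
    simp only [Cmat, mul_one, hs]
    rw [sum_fin_le' n i (fun t => l ^ ((i:ℕ) - t))]
    rw [← Finset.sum_range_reflect (fun t => l ^ t) ((i:ℕ)+1)]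
    exact Finset.sum_congr rfl fun t ht => by norm_num
  -- basic facts about s
  have hs1 : ∀ i : Fin n, 1 ≤ s i := by
    intro i
    have h0 : (l:ℝ)^0 ≤ ∑ t ∈ Finset.range ((i:ℕ)+1), l^t :=
      Finset.single_le_sum (f := fun t => l^t) (fun t _ => pow_nonneg hl0 t)
        (Finset.mem_range.mpr (Nat.succ_pos _))
    simpa [hs] using h0
  have hgeom : ∀ i : Fin n, u * s i = 1 - l^((i:ℕ)+1) := by
    intro i
    have h := geom_sum_mul l ((i:ℕ)+1)
    simp only [hs, hu]
    nlinarith [h]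
  -- the Cauchy–Schwarz witness vector c
  set c : Fin n → ℝ := fun i => if (i:ℕ) = n-1 then 1 else u with hc
  set S : ℝ := ∑ i : Fin n, (s i)^2 with hS
  set M : ℝ := ∑ i : Fin n, (c i)^2 with hM
  have hS0 : 0 ≤ S := Finset.sum_nonneg fun i _ => sq_nonneg _
  have hM0 : 0 ≤ M := Finset.sum_nonneg fun i _ => sq_nonneg _
  -- ∑ c i * s i = n
  have hcs : (∑ i : Fin n, c i * s i) = n := by
    have key : ∀ i : Fin n, c i * s i =
        (u * s i) + (if (i:ℕ) = n-1 then l * s ⟨n-1, hlast⟩ else 0) := by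
      intro i
      simp only [hc]
      split_ifs with h
      · rw [show i = (⟨n-1, hlast⟩ : Fin n) from Fin.ext h, hu]; ring
      · ring
    simp only [key, Finset.sum_add_distrib, hgeom]
    rw [sum_fin_single' n (n-1) hlast]
    rw [Finset.sum_sub_distrib]
    have hsl : s ⟨n-1, hlast⟩ = ∑ t ∈ Finset.range n, l^t := by
      simp only [hs]
      congr 1
      show Finset.range (n-1+1) = Finset.range n
      rw [Nat.sub_add_cancel hn]
    have hpow : (∑ i : Fin n, l^((i:ℕ)+1)) = l * s ⟨n-1, hlast⟩ := by
      rw [Fin.sum_univ_eq_sum_range (fun t => l^(t+1)) n, hsl, Finset.mul_sum]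
      exact Finset.sum_congr rfl fun t _ => by rw [pow_succ]; ring
    rw [hpow]
    simp
  -- ∑ c i ^ 2 = n u² + 1 - u²
  have hc2 : M = (n:ℝ) * u^2 + 1 - u^2 := by
    have key : ∀ i : Fin n, (c i)^2 = u^2 + (if (i:ℕ) = n-1 then 1 - u^2 else 0) := by
      intro i
      simp only [hc]
      split_ifs <;> ring
    simp only [hM, key, Finset.sum_add_distrib]
    rw [sum_fin_single' n (n-1) hlast]
    simp [mul_comm]
    ring
  -- Cauchy–Schwarz
  have hMS : (n:ℝ)^2 ≤ M * S := by
    have := Finset.sum_mul_sq_le_sq_mul_sq Finset.univ c s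
    rwa [hcs] at this
  have hSn : (n:ℝ) ≤ S := by
    have h1 : ∀ i : Fin n, (1:ℝ) ≤ (s i)^2 := by
      intro i
      nlinarith [hs1 i]
    calc (n:ℝ) = ∑ _i : Fin n, (1:ℝ) := by simp
    _ ≤ S := Finset.sum_le_sum fun i _ => h1 i
  -- norm of Ce
  have hmvnorm : norm2 ((Cmat n l).mulVec (fun _ => 1)) = Real.sqrt S := by
    unfold norm2
    congr 1
    exact Finset.sum_congr rfl fun i _ => by rw [hmv i]
  -- the last row of B equals c
  have hlastrow : (∑ j : Fin n, ((Amat n * Cinvmat n l) (⟨n-1, hlast⟩ : Fin n) j)^2) = M := by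
    rw [Brow_sq, hc2, ← hu]
    rw [Nat.cast_sub hn]
    push_cast
    ring
  have hrowle : Real.sqrt M ≤ rowMax (Amat n * Cinvmat n l) := by
    have h := le_ciSup (f := fun i : Fin n => norm2 (fun j => (Amat n * Cinvmat n l) i j))
      (Set.Finite.bddAbove (Set.finite_range _)) (⟨n-1, hlast⟩ : Fin n)
    refine le_trans (le_of_eq ?_) h
    unfold norm2
    rw [hlastrow]
  have hnMS : (n:ℝ) ≤ Real.sqrt M * Real.sqrt S := by
    rw [← Real.sqrt_mul hM0]
    calc (n:ℝ) = Real.sqrt ((n:ℝ)^2) := by rw [Real.sqrt_sq hnR.le]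
    _ ≤ Real.sqrt (M * S) := Real.sqrt_le_sqrt hMS
  constructor
  · -- MaxSE
    rw [hmvnorm]
    calc (n:ℝ) ≤ Real.sqrt M * Real.sqrt S := hnMS
    _ ≤ rowMax (Amat n * Cinvmat n l) * Real.sqrt S :=
        mul_le_mul_of_nonneg_right hrowle (Real.sqrt_nonneg _)
  · -- RMSE
    rw [hmvnorm]
    set F : ℝ := ∑ i : Fin n, ∑ j : Fin n, ((Amat n * Cinvmat n l) i j)^2 with hFdef
    have hF0 : 0 ≤ F := Finset.sum_nonneg fun i _ => Finset.sum_nonneg fun j _ => sq_nonneg _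
    have hF : F = (n:ℝ) + u^2 * ((n:ℝ) * ((n:ℝ)-1) / 2) := by
      have key : ∀ i : Fin n, (∑ j : Fin n, ((Amat n * Cinvmat n l) i j)^2)
          = 1 + (i:ℕ) * u^2 := fun i => by rw [Brow_sq, hu]
      simp only [hFdef, key, Finset.sum_add_distrib]
      rw [← Finset.sum_mul, Fin.sum_univ_eq_sum_range (fun i => (i:ℝ)) n, gauss2]
      simp [mul_comm]
    have hfrob : frob (Amat n * Cinvmat n l) = Real.sqrt F := by
      unfold frob
      rw [hFdef]
    rw [hfrob]
    have hFS : (n:ℝ) * ((n:ℝ)+1) / 2 ≤ F * S / n := by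
      rw [le_div_iff₀ hnR]
      have e2 : F * S = ((n:ℝ)/2) * (M * S + S) := by rw [hF, hc2]; ring
      have h2 : 0 ≤ ((n:ℝ)/2) * ((M * S - (n:ℝ)^2) + (S - n)) := by
        apply mul_nonneg (by linarith)
        linarith [hMS, hSn]
      linarith [h2, e2]
    calc Real.sqrt ((n:ℝ) * ((n:ℝ)+1) / 2) ≤ Real.sqrt (F * S / n) := Real.sqrt_le_sqrt hFS
    _ = 1 / Real.sqrt n * Real.sqrt F * Real.sqrt S := by
        rw [Real.sqrt_div (mul_nonneg hF0 hS0) n, Real.sqrt_mul hF0]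
        ring
end

section
/- Let n = k·b with k, b ≥ 1 positive integers and λ ∈ (0,1). Let D = diag(d_1, …, d_n) where d_j is the Euclidean norm of the j-th column of C_λ, and let C̃ = C_λ D^{-1} be the column-normalized matrix (all of whose columns have unit Euclidean norm). Then for every (k,b)-admissible set π ⊆ {1,…,n}, the Euclidean norm of ∑_{i∈π} C̃_{:,i} is at most the Euclidean norm of ∑_{j=0}^{k−1} C̃_{:,jb+1}; that is, the sensitivity of the column-normalized DP-λCGD strategy matrix equals ‖∑_{j=0}^{k−1} (C_λ D^{-1})_{:,jb+1}‖₂. -/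
open Finset

namespace Stmt13

noncomputable def S (x : ℝ) (m : ℕ) : ℝ := ∑ t ∈ Finset.range m, x ^ t

lemma S_split (x : ℝ) (m r : ℕ) : S x (m + r) = S x m + x ^ m * S x r := by
  simp only [S, Finset.sum_range_add, Finset.mul_sum, pow_add]

lemma S_nonneg {x : ℝ} (hx : 0 ≤ x) (m : ℕ) : 0 ≤ S x m :=
  Finset.sum_nonneg fun t _ => pow_nonneg hx t

lemma S_pos {x : ℝ} (hx : 0 < x) {m : ℕ} (hm : 1 ≤ m) : 0 < S x m :=
  Finset.sum_pos (fun t _ => pow_pos hx t) (by simp [Finset.nonempty_range_iff]; omega)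

lemma S_mono {x : ℝ} (hx : 0 ≤ x) {m m' : ℕ} (h : m ≤ m') : S x m ≤ S x m' :=
  Finset.sum_le_sum_of_subset_of_nonneg (Finset.range_subset_range.mpr h)
    (fun t _ _ => pow_nonneg hx t)

lemma S_ratio {x : ℝ} (hx0 : 0 ≤ x) (hx1 : x ≤ 1) {g a a' : ℕ} (hga : g ≤ a) (haa' : a ≤ a') :
    S x (a - g) * S x a' ≤ S x (a' - g) * S x a := by
  obtain ⟨r, rfl⟩ := Nat.exists_eq_add_of_le haa'
  have h1 : a + r - g = (a - g) + r := by omega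
  rw [h1, S_split, S_split]
  have h2 : S x (a - g) ≤ S x a := S_mono hx0 (by omega)
  have h3 : x ^ a ≤ x ^ (a - g) := pow_le_pow_of_le_one hx0 hx1 (by omega)
  have h4 : 0 ≤ S x r := S_nonneg hx0 r
  have h5 : 0 ≤ S x (a - g) := S_nonneg hx0 _
  have key : S x (a - g) * (x ^ a * S x r) ≤ S x a * (x ^ (a - g) * S x r) :=
    mul_le_mul h2 (mul_le_mul_of_nonneg_right h3 h4)
      (by positivity) (le_trans h5 h2)
  nlinarith [key]


lemma colsq (n : ℕ) (l : ℝ) (q : Fin n) :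
    ∑ i : Fin n, (Cmat n l i q) ^ 2 = S (l ^ 2) (n - q) := by
  have h1 : ∑ i : Fin n, (Cmat n l i q) ^ 2
      = ∑ i ∈ Finset.range n, (if (q : ℕ) ≤ i then (l ^ 2) ^ (i - (q : ℕ)) else 0) := by
    rw [← Fin.sum_univ_eq_sum_range (fun i => if (q:ℕ) ≤ i then (l^2)^(i - (q:ℕ)) else 0) n]
    apply Finset.sum_congr rfl
    intro i _
    simp only [Cmat]
    split
    · rw [← pow_mul, ← pow_mul]; ring_nf
    · simp
  rw [h1, Finset.range_eq_Ico, ← Finset.sum_Ico_consecutive _ (Nat.zero_le (q:ℕ)) (le_of_lt q.isLt)]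
  have h2 : ∑ i ∈ Finset.Ico 0 (q:ℕ), (if (q:ℕ) ≤ i then (l^2)^(i - (q:ℕ)) else 0) = 0 := by
    apply Finset.sum_eq_zero
    intro i hi
    simp only [Finset.mem_Ico] at hi
    rw [if_neg (by omega)]
  rw [h2, zero_add, Finset.sum_Ico_eq_sum_range]
  apply Finset.sum_congr rfl
  intro i hi
  rw [if_pos (by omega)]
  congr 1
  omega

lemma dcol_eq (n : ℕ) (l : ℝ) (q : Fin n) : dcol n l q = Real.sqrt (S (l^2) (n - q)) := by
  rw [dcol, norm2, colsq]

lemma dcol_sq {n : ℕ} {l : ℝ} (hx : 0 ≤ l) (q : Fin n) :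
    dcol n l q * dcol n l q = S (l^2) (n - q) := by
  rw [dcol_eq]
  exact Real.mul_self_sqrt (Finset.sum_nonneg fun t _ => pow_nonneg (by positivity) t)


lemma dcol_pos {n : ℕ} {l : ℝ} (hl : 0 < l) (q : Fin n) : 0 < dcol n l q := by
  rw [dcol_eq]
  exact Real.sqrt_pos.mpr (S_pos (by positivity) (by have := q.isLt; omega))

lemma Ctil_apply {n : ℕ} {l : ℝ} (hl : 0 < l) (i j : Fin n) :
    Ctil n l i j = Cmat n l i j * (dcol n l j)⁻¹ := by
  have hinv : (Matrix.diagonal (dcol n l))⁻¹ = Matrix.diagonal (fun j => (dcol n l j)⁻¹) := by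
    apply Matrix.inv_eq_right_inv
    rw [Matrix.diagonal_mul_diagonal]
    convert Matrix.diagonal_one
    exact mul_inv_cancel₀ (ne_of_gt (dcol_pos hl _))
  rw [Ctil, hinv, Matrix.mul_diagonal]


/-- the inner product value as a function of natural indices -/
noncomputable def F (n : ℕ) (l : ℝ) (p q : ℕ) : ℝ :=
  l ^ (q - p) * (Real.sqrt (S (l^2) (n - q)) / Real.sqrt (S (l^2) (n - p)))

lemma IP_eq {n : ℕ} {l : ℝ} (hl : 0 < l) (p q : Fin n) (hpq : (p : ℕ) ≤ q) :
    ∑ i, Ctil n l i p * Ctil n l i q = F n l p q := by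
  simp only [Ctil_apply hl]
  have h1 : ∀ i : Fin n, Cmat n l i p * (dcol n l p)⁻¹ * (Cmat n l i q * (dcol n l q)⁻¹)
      = (Cmat n l i p * Cmat n l i q) * ((dcol n l p)⁻¹ * (dcol n l q)⁻¹) := by
    intro i; ring
  simp only [h1]
  rw [← Finset.sum_mul]
  have h2 : ∀ i : Fin n, Cmat n l i p * Cmat n l i q = l ^ ((q:ℕ) - p) * (Cmat n l i q)^2 := by
    intro i
    by_cases h : (q : ℕ) ≤ (i : ℕ)
    · have hp : (p : ℕ) ≤ (i : ℕ) := le_trans hpq h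
      simp only [Cmat, if_pos h, if_pos hp]
      rw [← pow_add, sq, ← pow_add, ← pow_add]
      congr 1
      omega
    · simp only [Cmat, if_neg h]
      ring
  simp only [h2]
  rw [← Finset.mul_sum, colsq]
  have hdp := dcol_pos hl p
  have hdq := dcol_pos hl q
  have hsq : S (l^2) (n - (q:ℕ)) = dcol n l q * dcol n l q := by
    rw [dcol_eq]
    exact (Real.mul_self_sqrt (S_nonneg (by positivity) _)).symm
  rw [hsq, F, ← dcol_eq, ← dcol_eq]
  field_simp

lemma F_le {n : ℕ} {l : ℝ} (hl0 : 0 < l) (hl1 : l < 1) {p q p0 q0 : ℕ}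
    (hq : q < n) (hq0 : q0 < n) (hpq : p ≤ q) (hp0q0 : p0 ≤ q0)
    (hp : p0 ≤ p) (hgap : q0 - p0 ≤ q - p) :
    F n l p q ≤ F n l p0 q0 := by
  set x := l ^ 2 with hx
  have hx0 : (0:ℝ) < x := by positivity
  have hx1 : x ≤ 1 := by nlinarith
  set g := q0 - p0 with hg
  set g' := q - p with hg'
  set a := n - p with ha
  set a' := n - p0 with ha'
  have h1 : n - q = a - g' := by omega
  have h2 : n - q0 = a' - g := by omega
  have hga : g ≤ a := by omega
  have hg'a : g' < a := by omega
  have haa' : a ≤ a' := by omega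
  -- positivity of the S's
  have hSa : 0 < S x a := S_pos hx0 (by omega)
  have hSa' : 0 < S x a' := S_pos hx0 (by omega)
  have hSag' : 0 < S x (a - g') := S_pos hx0 (by omega)
  have hSag : 0 < S x (a - g) := S_pos hx0 (by omega)
  have hSa'g : 0 < S x (a' - g) := S_pos hx0 (by omega)
  rw [F, F, h1, h2]
  have hpow : l ^ g' ≤ l ^ g := pow_le_pow_of_le_one (le_of_lt hl0) (le_of_lt hl1) hgap
  have hr1 : Real.sqrt (S x (a - g')) / Real.sqrt (S x a)
      ≤ Real.sqrt (S x (a - g)) / Real.sqrt (S x a) := by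
    gcongr
    exact S_mono (le_of_lt hx0) (by omega)
  have hr2 : Real.sqrt (S x (a - g)) / Real.sqrt (S x a)
      ≤ Real.sqrt (S x (a' - g)) / Real.sqrt (S x a') := by
    rw [← Real.sqrt_div (le_of_lt hSag), ← Real.sqrt_div (le_of_lt hSa'g)]
    apply Real.sqrt_le_sqrt
    rw [div_le_div_iff₀ hSa hSa']
    exact S_ratio (le_of_lt hx0) hx1 hga haa'
  have hnn : 0 ≤ Real.sqrt (S x (a - g')) / Real.sqrt (S x a) := by positivity
  exact mul_le_mul hpow (hr1.trans hr2) hnn (pow_nonneg (le_of_lt hl0) g)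

end Stmt13

/- STATEMENT 13: for the column-normalized DP-λCGD strategy matrix C̃ = C_λ D⁻¹, the
column sum of any (k,b)-admissible set π is (in Euclidean norm) at most the sum of the
leftmost b-separated columns 1, 1+b, …, 1+(k−1)b; i.e. the sensitivity equals
‖∑_{j=0}^{k−1} (C_λ D⁻¹)_{:,jb+1}‖₂. -/
open Stmt13 in
/-- for the column-normalized DP-λCGD strategy matrix C̃ = C_λ D⁻¹, the
column sum of any (k,b)-admissible set π is (in Euclidean norm) at most the sum of the
leftmost b-separated columns 1, 1+b, …, 1+(k−1)b; i.e. the sensitivity equals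
‖∑_{j=0}^{k−1} (C_λ D⁻¹)_{:,jb+1}‖₂. -/
theorem stmt_13 (n k b : ℕ) (hk : 1 ≤ k) (hb : 1 ≤ b) (hn : n = k * b)
    (l : ℝ) (hl : l ∈ Set.Ioo (0 : ℝ) 1)
    (π : Finset (Fin n)) (hcard : π.card ≤ k)
    (hsep : ∀ i ∈ π, ∀ j ∈ π, i ≠ j → b ≤ Nat.dist (i : ℕ) (j : ℕ)) :
    norm2 (fun i => ∑ p ∈ π, Ctil n l i p) ≤ sens n k b (Ctil n l) := by
  obtain ⟨hl0, hl1⟩ := hl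
  classical
  set m := π.card with hm
  set E : Fin m ↪o Fin n := π.orderEmbOfFin hm.symm with hEdef
  have hEmem : ∀ s : Fin m, E s ∈ π := fun s => Finset.orderEmbOfFin_mem π hm.symm s
  have hmono : StrictMono E := E.strictMono
  -- separation along the ordered enumeration
  have step : ∀ (s : Fin m) (j : ℕ) (h : (s:ℕ) + j < m),
      (E s : ℕ) + j * b ≤ (E ⟨(s:ℕ)+j, h⟩ : ℕ) := by
    intro s j
    induction j with
    | zero => intro h; simp
    | succ j ih =>
      intro h
      have h' : (s:ℕ) + j < m := by omega
      have ih' := ih h'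
      set t1 : Fin m := ⟨(s:ℕ)+j, h'⟩ with ht1
      set t2 : Fin m := ⟨(s:ℕ)+(j+1), h⟩ with ht2
      have hlt : t1 < t2 := by
        rw [ht1, ht2]; exact Fin.mk_lt_mk.mpr (by omega)
      have hEE : E t1 < E t2 := hmono hlt
      have hEE' : (E t1 : ℕ) < (E t2 : ℕ) := hEE
      have hd := hsep _ (hEmem t1) _ (hEmem t2) (ne_of_lt hEE)
      rw [Nat.dist_eq_sub_of_le (le_of_lt hEE')] at hd
      have hb' : b ≤ (E t2 : ℕ) - (E t1 : ℕ) := hd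
      rw [Nat.succ_mul]
      generalize j * b = c at ih' ⊢
      omega
  have hlow : ∀ s : Fin m, (s:ℕ) * b ≤ (E s : ℕ) := by
    intro s
    have h : ((⟨0, Nat.lt_of_le_of_lt (Nat.zero_le _) s.isLt⟩ : Fin m) : ℕ) + (s:ℕ) < m := by
      simpa using s.isLt
    have := step ⟨0, Nat.lt_of_le_of_lt (Nat.zero_le _) s.isLt⟩ (s:ℕ) h
    have heq : (⟨((⟨0, Nat.lt_of_le_of_lt (Nat.zero_le _) s.isLt⟩ : Fin m) : ℕ) + (s:ℕ), h⟩ : Fin m) = s := by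
      apply Fin.ext; simp
    rw [heq] at this
    omega
  have hgap : ∀ s t : Fin m, (s:ℕ) ≤ t → ((t:ℕ) - s) * b + (E s:ℕ) ≤ (E t:ℕ) := by
    intro s t hst
    have h : (s:ℕ) + ((t:ℕ) - (s:ℕ)) < m := by have := t.isLt; omega
    have := step s ((t:ℕ)-(s:ℕ)) h
    have heq : (⟨(s:ℕ) + ((t:ℕ) - (s:ℕ)), h⟩ : Fin m) = t := by
      apply Fin.ext; simp; omega
    rw [heq] at this
    omega
  -- nonnegativity of entries
  have hCtil_nonneg : ∀ i j : Fin n, 0 ≤ Ctil n l i j := by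
    intro i j
    rw [Ctil_apply hl0]
    apply mul_nonneg
    · unfold Cmat
      split
      · positivity
      · exact le_rfl
    · exact inv_nonneg.mpr (le_of_lt (dcol_pos hl0 j))
  have hIPnonneg : ∀ p q : Fin n, 0 ≤ ∑ i, Ctil n l i p * Ctil n l i q :=
    fun p q => Finset.sum_nonneg fun i _ => mul_nonneg (hCtil_nonneg _ _) (hCtil_nonneg _ _)
  have hcbk : ∀ j : ℕ, j < k → j * b < n := by
    intro j hj
    calc j * b < j * b + b := by omega
    _ = (j+1) * b := (Nat.succ_mul j b).symm
    _ ≤ k * b := Nat.mul_le_mul_right b hj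
    _ = n := hn.symm
  set W : ℕ → Fin n → ℝ := fun j i => if h : j * b < n then Ctil n l i ⟨j*b, h⟩ else 0 with hWdef
  have hWnonneg : ∀ j i, 0 ≤ W j i := by
    intro j i
    rw [hWdef]
    dsimp only
    split
    · exact hCtil_nonneg _ _
    · exact le_rfl
  set G : ℕ → ℕ → ℝ := fun s t => ∑ i, W s i * W t i with hGdef
  have hGnonneg : ∀ s t, 0 ≤ G s t :=
    fun s t => Finset.sum_nonneg fun i _ => mul_nonneg (hWnonneg _ _) (hWnonneg _ _)
  set cbm : Fin m → Fin n := fun s => ⟨(s:ℕ)*b, hcbk _ (lt_of_lt_of_le s.isLt hcard)⟩ with hcbm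
  -- the two key norms as square roots
  have hL : norm2 (fun i => ∑ p ∈ π, Ctil n l i p)
      = Real.sqrt (∑ i, (∑ p ∈ π, Ctil n l i p)^2) := rfl
  have hR : sens n k b (Ctil n l)
      = Real.sqrt (∑ i, (∑ j ∈ Finset.range k, W j i)^2) := rfl
  rw [hL, hR]
  apply Real.sqrt_le_sqrt
  -- square expansions
  have expand1 : ∑ i, (∑ p ∈ π, Ctil n l i p)^2
      = ∑ p ∈ π, ∑ q ∈ π, ∑ i, Ctil n l i p * Ctil n l i q := by
    simp_rw [sq, Finset.sum_mul_sum]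
    rw [Finset.sum_comm]
    exact Finset.sum_congr rfl fun p _ => Finset.sum_comm
  have expand2 : ∑ i, (∑ j ∈ Finset.range k, W j i)^2
      = ∑ s ∈ Finset.range k, ∑ t ∈ Finset.range k, G s t := by
    simp_rw [sq, Finset.sum_mul_sum]
    rw [Finset.sum_comm]
    exact Finset.sum_congr rfl fun p _ => Finset.sum_comm
  -- reindex sums over π by the order embedding
  have hsum : ∀ g : Fin n → ℝ, ∑ p ∈ π, g p = ∑ s : Fin m, g (E s) := by
    intro g
    rw [← Finset.sum_coe_sort π g,
      ← Equiv.sum_comp (π.orderIsoOfFin hm.symm).toEquiv (fun p : {x // x ∈ π} => g (↑p))]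
    exact Finset.sum_congr rfl fun s _ => by
      rw [show ((π.orderIsoOfFin hm.symm).toEquiv s : Fin n) = E s from
        Finset.coe_orderIsoOfFin_apply π hm.symm s]
  -- the pairwise comparison
  have pairmain : ∀ s t : Fin m, (s:ℕ) ≤ (t:ℕ) →
      (∑ i, Ctil n l i (E s) * Ctil n l i (E t))
        ≤ ∑ i, Ctil n l i (cbm s) * Ctil n l i (cbm t) := by
    intro s t hst
    have hEst : (E s : ℕ) ≤ (E t : ℕ) := hmono.monotone (show s ≤ t from hst)
    have hcst : ((cbm s : Fin n) : ℕ) ≤ ((cbm t : Fin n) : ℕ) := Nat.mul_le_mul_right b hst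
    rw [IP_eq hl0 _ _ hEst, IP_eq hl0 _ _ hcst]
    have hgap' : ((cbm t : Fin n):ℕ) - ((cbm s : Fin n):ℕ) ≤ (E t : ℕ) - (E s : ℕ) := by
      have h1 := hgap s t hst
      rw [Nat.sub_mul] at h1
      exact Nat.le_sub_of_add_le h1
    exact F_le hl0 hl1 (E t).isLt (cbm t).isLt hEst hcst (hlow s) hgap'
  have pair : ∀ s t : Fin m,
      (∑ i, Ctil n l i (E s) * Ctil n l i (E t))
        ≤ ∑ i, Ctil n l i (cbm s) * Ctil n l i (cbm t) := by
    intro s t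
    rcases le_total (s:ℕ) (t:ℕ) with h | h
    · exact pairmain s t h
    · have h2 := pairmain t s h
      calc ∑ i, Ctil n l i (E s) * Ctil n l i (E t)
          = ∑ i, Ctil n l i (E t) * Ctil n l i (E s) :=
            Finset.sum_congr rfl fun i _ => mul_comm _ _
        _ ≤ ∑ i, Ctil n l i (cbm t) * Ctil n l i (cbm s) := h2
        _ = ∑ i, Ctil n l i (cbm s) * Ctil n l i (cbm t) :=
            Finset.sum_congr rfl fun i _ => mul_comm _ _
  -- identification of canonical columns with W
  have hWc : ∀ (s t : Fin m), (∑ i, Ctil n l i (cbm s) * Ctil n l i (cbm t)) = G (s:ℕ) (t:ℕ) := by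
    intro s t
    rw [hGdef]
    dsimp only
    apply Finset.sum_congr rfl
    intro i _
    rw [hWdef]
    dsimp only
    rw [dif_pos (hcbk (s:ℕ) (lt_of_lt_of_le s.isLt hcard)),
        dif_pos (hcbk (t:ℕ) (lt_of_lt_of_le t.isLt hcard))]
  calc ∑ i, (∑ p ∈ π, Ctil n l i p)^2
      = ∑ p ∈ π, ∑ q ∈ π, ∑ i, Ctil n l i p * Ctil n l i q := expand1
    _ = ∑ s : Fin m, ∑ t : Fin m, ∑ i, Ctil n l i (E s) * Ctil n l i (E t) := by
        rw [hsum (fun p => ∑ q ∈ π, ∑ i, Ctil n l i p * Ctil n l i q)]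
        exact Finset.sum_congr rfl fun s _ =>
          hsum (fun q => ∑ i, Ctil n l i (E s) * Ctil n l i q)
    _ ≤ ∑ s : Fin m, ∑ t : Fin m, ∑ i, Ctil n l i (cbm s) * Ctil n l i (cbm t) :=
        Finset.sum_le_sum fun s _ => Finset.sum_le_sum fun t _ => pair s t
    _ = ∑ s : Fin m, ∑ t : Fin m, G (s:ℕ) (t:ℕ) :=
        Finset.sum_congr rfl fun s _ => Finset.sum_congr rfl fun t _ => hWc s t
    _ = ∑ s ∈ Finset.range m, ∑ t ∈ Finset.range m, G s t := by
        rw [← Fin.sum_univ_eq_sum_range (fun s => ∑ t ∈ Finset.range m, G s t) m]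
        exact Finset.sum_congr rfl fun s _ => Fin.sum_univ_eq_sum_range (G (s:ℕ)) m
    _ ≤ ∑ s ∈ Finset.range m, ∑ t ∈ Finset.range k, G s t :=
        Finset.sum_le_sum fun s _ =>
          Finset.sum_le_sum_of_subset_of_nonneg (Finset.range_subset_range.mpr hcard)
            (fun t _ _ => hGnonneg s t)
    _ ≤ ∑ s ∈ Finset.range k, ∑ t ∈ Finset.range k, G s t :=
        Finset.sum_le_sum_of_subset_of_nonneg (Finset.range_subset_range.mpr hcard)
          (fun s _ _ => Finset.sum_nonneg fun t _ => hGnonneg s t)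
    _ = ∑ i, (∑ j ∈ Finset.range k, W j i)^2 := expand2.symm
end

section
/- Let n ≥ 2, λ ∈ (0,1), and let C̃ = C_λ D^{-1} be the column-normalized DP-λCGD strategy matrix. Then for all indices 1 ≤ i < j ≤ n, the inner product of columns satisfies ⟨C̃_{:,i}, C̃_{:,j}⟩ ≤ ⟨C̃_{:,i}, C̃_{:,j−1}⟩; indeed the difference equals (λ^{j−i−1}/d_i)·(d_{j−1} − λ d_j) ≥ 0. -/
open Finset

lemma dcol_sq (n : ℕ) (l : ℝ) (j : Fin n) :
    dcol n l j ^ 2 = ∑ t, Cmat n l t j ^ 2 := by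
  unfold dcol norm2
  rw [Real.sq_sqrt]
  positivity

lemma dcol_pos (n : ℕ) (l : ℝ) (hl : 0 < l) (j : Fin n) : 0 < dcol n l j := by
  unfold dcol norm2
  apply Real.sqrt_pos.mpr
  apply Finset.sum_pos' (fun t _ => by positivity)
  refine ⟨j, Finset.mem_univ _, ?_⟩
  simp [Cmat]

lemma ip (n : ℕ) (l : ℝ) (i a : Fin n) (h : (i : ℕ) ≤ (a : ℕ)) :
    ∑ t, Cmat n l t i * Cmat n l t a =
      l ^ ((a : ℕ) - (i : ℕ)) * ∑ t, Cmat n l t a ^ 2 := by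
  rw [Finset.mul_sum]
  refine Finset.sum_congr rfl fun t _ => ?_
  unfold Cmat
  by_cases ht : (a : ℕ) ≤ (t : ℕ)
  · have hit : (i : ℕ) ≤ (t : ℕ) := le_trans h ht
    simp only [if_pos ht, if_pos hit]
    rw [← pow_add, sq, ← pow_add, ← pow_add]
    congr 1
    omega
  · simp only [if_neg ht]
    ring

lemma Ctil_apply (n : ℕ) (l : ℝ) (hl : 0 < l) (t j : Fin n) :
    Ctil n l t j = Cmat n l t j * (dcol n l j)⁻¹ := by
  have hinv : (Matrix.diagonal (dcol n l))⁻¹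
      = Matrix.diagonal (fun a => (dcol n l a)⁻¹) := by
    apply Matrix.inv_eq_right_inv
    have hone : (fun a => dcol n l a * (dcol n l a)⁻¹) = fun _ => (1:ℝ) :=
      funext fun a => mul_inv_cancel₀ (dcol_pos n l hl a).ne'
    rw [Matrix.diagonal_mul_diagonal, hone, Matrix.diagonal_one]
  unfold Ctil
  rw [hinv, Matrix.mul_diagonal]

lemma ip_til (n : ℕ) (l : ℝ) (hl : 0 < l) (i a : Fin n) (h : (i : ℕ) ≤ (a : ℕ)) :
    ∑ t, Ctil n l t i * Ctil n l t a =
      l ^ ((a : ℕ) - (i : ℕ)) * dcol n l a / dcol n l i := by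
  have h1 : ∑ t, Ctil n l t i * Ctil n l t a =
      (dcol n l i)⁻¹ * (dcol n l a)⁻¹ * ∑ t, Cmat n l t i * Cmat n l t a := by
    rw [Finset.mul_sum]
    refine Finset.sum_congr rfl fun t _ => ?_
    rw [Ctil_apply n l hl, Ctil_apply n l hl]
    ring
  rw [h1, ip n l i a h, ← dcol_sq]
  have hdi := (dcol_pos n l hl i).ne'
  have hda := (dcol_pos n l hl a).ne'
  field_simp

lemma ldj_le (n : ℕ) (l : ℝ) (hl : 0 ≤ l) (j j' : Fin n) (h : (j' : ℕ) + 1 = (j : ℕ)) :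
    l * dcol n l j ≤ dcol n l j' := by
  unfold dcol norm2
  have h1 : l * Real.sqrt (∑ t, Cmat n l t j ^ 2)
      = Real.sqrt (l ^ 2 * ∑ t, Cmat n l t j ^ 2) := by
    rw [Real.sqrt_mul (by positivity), Real.sqrt_sq hl]
  rw [h1]
  apply Real.sqrt_le_sqrt
  rw [Finset.mul_sum]
  refine Finset.sum_le_sum fun t _ => ?_
  unfold Cmat
  by_cases ht : (j : ℕ) ≤ (t : ℕ)
  · have ht' : (j' : ℕ) ≤ (t : ℕ) := by omega
    simp only [if_pos ht, if_pos ht']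
    apply le_of_eq
    have he : (t : ℕ) - (j' : ℕ) = ((t : ℕ) - (j : ℕ)) + 1 := by omega
    rw [he]
    ring
  · rw [if_neg ht]
    by_cases ht' : (j' : ℕ) ≤ (t : ℕ)
    · have h0 : (0:ℝ) ≤ (l ^ ((t : ℕ) - (j' : ℕ))) ^ 2 := by positivity
      simp only [ht', if_true]
      nlinarith
    · simp [ht']

/-- for columns i < j of C̃ = C_λ D⁻¹ (Fin-indexed, matching the
1-indexed claim 1 ≤ i < j ≤ n), ⟨C̃_{:,i}, C̃_{:,j}⟩ ≤ ⟨C̃_{:,i}, C̃_{:,j−1}⟩; the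
difference equals (λ^{j−i−1}/d_i)·(d_{j−1} − λ d_j) ≥ 0. -/
theorem stmt_14 (n : ℕ) (hn : 2 ≤ n) (l : ℝ) (hl : l ∈ Set.Ioo (0 : ℝ) 1)
    (i j : Fin n) (hij : i < j) :
    (∑ t, Ctil n l t i * Ctil n l t j) ≤
      (∑ t, Ctil n l t i * Ctil n l t ⟨(j : ℕ) - 1, by have := j.isLt; omega⟩) ∧
    (∑ t, Ctil n l t i * Ctil n l t ⟨(j : ℕ) - 1, by have := j.isLt; omega⟩) -
      (∑ t, Ctil n l t i * Ctil n l t j) =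
      l ^ ((j : ℕ) - (i : ℕ) - 1) / dcol n l i *
        (dcol n l ⟨(j : ℕ) - 1, by have := j.isLt; omega⟩ - l * dcol n l j) ∧
    0 ≤ l ^ ((j : ℕ) - (i : ℕ) - 1) / dcol n l i *
        (dcol n l ⟨(j : ℕ) - 1, by have := j.isLt; omega⟩ - l * dcol n l j) := by
  obtain ⟨hl0, hl1⟩ := hl
  set j' : Fin n := (⟨(j : ℕ) - 1, by have := j.isLt; omega⟩ : Fin n) with hj'
  have hij' : (i : ℕ) ≤ (j' : ℕ) := by
    have : (i : ℕ) < (j : ℕ) := hij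
    simp [hj']; omega
  have hjj' : (j' : ℕ) + 1 = (j : ℕ) := by
    have : (i : ℕ) < (j : ℕ) := hij
    simp [hj']; omega
  have hle : (i : ℕ) ≤ (j : ℕ) := le_of_lt hij
  have e1 := ip_til n l hl0 i j hle
  have e2 := ip_til n l hl0 i j' hij'
  have hdi := dcol_pos n l hl0 i
  have hpow : l ^ ((j : ℕ) - (i : ℕ)) = l ^ ((j : ℕ) - (i : ℕ) - 1) * l := by
    rw [← pow_succ]
    congr 1
    omega
  have hexp : (j' : ℕ) - (i : ℕ) = (j : ℕ) - (i : ℕ) - 1 := by omega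
  have hdiff : (∑ t, Ctil n l t i * Ctil n l t j') - (∑ t, Ctil n l t i * Ctil n l t j) =
      l ^ ((j : ℕ) - (i : ℕ) - 1) / dcol n l i * (dcol n l j' - l * dcol n l j) := by
    rw [e1, e2, hexp, hpow]
    field_simp
  have hnn : 0 ≤ l ^ ((j : ℕ) - (i : ℕ) - 1) / dcol n l i *
      (dcol n l j' - l * dcol n l j) := by
    apply mul_nonneg (by positivity)
    have := ldj_le n l hl0.le j j' hjj'
    linarith
  exact ⟨by linarith, hdiff, hnn⟩
end

section
/- Let n ≥ 1 and λ ∈ (0,1). The matrix B̃_λ = A D C_λ^{-1} has entries (B̃_λ)_{ij} = d_j − λ d_{j+1} for j < i, (B̃_λ)_{ij} = d_j for j = i, and 0 for j > i, and consequently its squared Frobenius norm satisfies ‖A D C_λ^{-1}‖_F² = ∑_{j=1}^{n} d_j² + ∑_{j=1}^{n−1} (n − j)·(d_j − λ d_{j+1})². -/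
open Finset

lemma count_aux (n j : ℕ) (c : ℝ) :
    ∑ i ∈ Finset.range n, (if j < i then c else 0) = ((n - (j+1) : ℕ) : ℝ) * c := by
  rw [← Finset.sum_filter, Finset.sum_const, nsmul_eq_mul]
  congr 2
  have : Finset.filter (fun a => j < a) (Finset.range n) = Finset.Ico (j+1) n := by
    ext x; simp [Finset.mem_filter, Finset.mem_Ico]; omega
  rw [this, Nat.card_Ico]

lemma cinv_split (n : ℕ) (l : ℝ) (t j : Fin n) :
    Cinvmat n l t j = (if t = j then (1:ℝ) else 0) + (if (t:ℕ) = (j:ℕ)+1 then -l else 0) := by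
  simp only [Cinvmat, Fin.ext_iff]
  split_ifs <;> first | omega | ring

/-- entrywise description of B̃_λ = A D C_λ⁻¹ (entries d_j − λ d_{j+1}
strictly below the diagonal, d_j on the diagonal, 0 above) and the resulting Frobenius
norm formula ‖A D C_λ⁻¹‖_F² = ∑_j d_j² + ∑_{j=1}^{n−1}(n−j)(d_j − λ d_{j+1})². -/
theorem stmt_18 (n : ℕ) (hn : 1 ≤ n) (l : ℝ) (hl : l ∈ Set.Ioo (0 : ℝ) 1) :
    (∀ i j : Fin n, (Amat n * Matrix.diagonal (dcol n l) * Cinvmat n l) i j =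
      if h : (j : ℕ) < (i : ℕ) then
        dcol n l j - l * dcol n l ⟨(j : ℕ) + 1, by have := i.isLt; omega⟩
      else if j = i then dcol n l j else 0) ∧
    frob (Amat n * Matrix.diagonal (dcol n l) * Cinvmat n l) ^ 2 =
      (∑ j : Fin n, dcol n l j ^ 2) +
      (∑ j ∈ Finset.range (n - 1), if h : j + 1 < n then
        ((n : ℝ) - ((j : ℝ) + 1)) *
          (dcol n l ⟨j, by omega⟩ - l * dcol n l ⟨j + 1, h⟩) ^ 2 else 0) := by
  have hentry : ∀ i j : Fin n, (Amat n * Matrix.diagonal (dcol n l) * Cinvmat n l) i j =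
      if h : (j : ℕ) < (i : ℕ) then
        dcol n l j - l * dcol n l ⟨(j : ℕ) + 1, by have := i.isLt; omega⟩
      else if j = i then dcol n l j else 0 := by
    intro i j
    rw [Matrix.mul_apply]
    have hAD : ∀ t : Fin n, (Amat n * Matrix.diagonal (dcol n l)) i t =
        (if (t:ℕ) ≤ (i:ℕ) then dcol n l t else 0) := by
      intro t
      rw [Matrix.mul_diagonal]
      simp [Amat, ite_mul]
    simp only [hAD, cinv_split, mul_add]
    rw [Finset.sum_add_distrib]
    have h1 : (∑ t : Fin n, (if (t:ℕ) ≤ (i:ℕ) then dcol n l t else 0) * (if t = j then (1:ℝ) else 0))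
        = (if (j:ℕ) ≤ (i:ℕ) then dcol n l j else 0) := by
      rw [Finset.sum_eq_single j]
      · simp
      · intro t _ ht; simp [ht]
      · simp
    have h2 : (∑ t : Fin n, (if (t:ℕ) ≤ (i:ℕ) then dcol n l t else 0) * (if (t:ℕ) = (j:ℕ)+1 then -l else 0))
        = (if h : (j:ℕ)+1 < n then
            (if (j:ℕ)+1 ≤ (i:ℕ) then dcol n l ⟨(j:ℕ)+1, h⟩ else 0) * (-l) else 0) := by
      by_cases h : (j:ℕ)+1 < n
      · rw [dif_pos h, Finset.sum_eq_single (⟨(j:ℕ)+1, h⟩ : Fin n)]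
        · simp
        · intro t _ ht
          have : (t:ℕ) ≠ (j:ℕ)+1 := by
            intro hc; apply ht; exact Fin.ext hc
          simp [this]
        · simp
      · rw [dif_neg h]
        apply Finset.sum_eq_zero
        intro t _
        have : (t:ℕ) ≠ (j:ℕ)+1 := by have := t.isLt; omega
        simp [this]
    rw [h1, h2]
    rcases lt_trichotomy (j:ℕ) (i:ℕ) with hji | hji | hji
    · have hi := i.isLt
      have hj1 : (j:ℕ)+1 < n := by omega
      rw [dif_pos hji, dif_pos hj1, if_pos (show (j:ℕ) ≤ (i:ℕ) by omega),
        if_pos (show (j:ℕ)+1 ≤ (i:ℕ) by omega)]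
      ring
    · have hji' : j = i := Fin.ext hji
      rw [dif_neg (show ¬(j:ℕ) < (i:ℕ) by omega), if_pos hji',
        if_pos (show (j:ℕ) ≤ (i:ℕ) by omega)]
      by_cases h : (j:ℕ)+1 < n
      · rw [dif_pos h, if_neg (show ¬(j:ℕ)+1 ≤ (i:ℕ) by omega)]; ring
      · rw [dif_neg h]; ring
    · rw [dif_neg (show ¬(j:ℕ) < (i:ℕ) by omega),
        if_neg (show ¬ j = i from fun hc => by rw [hc] at hji; omega),
        if_neg (show ¬(j:ℕ) ≤ (i:ℕ) by omega)]
      by_cases h : (j:ℕ)+1 < n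
      · rw [dif_pos h, if_neg (show ¬(j:ℕ)+1 ≤ (i:ℕ) by omega)]; ring
      · rw [dif_neg h]; ring
  refine ⟨hentry, ?_⟩
  have hnn : (0:ℝ) ≤ ∑ i, ∑ j, (Amat n * Matrix.diagonal (dcol n l) * Cinvmat n l) i j ^ 2 := by
    positivity
  rw [frob, Real.sq_sqrt hnn, Finset.sum_comm]
  have hcol : ∀ j : Fin n,
      (∑ i : Fin n, (Amat n * Matrix.diagonal (dcol n l) * Cinvmat n l) i j ^ 2)
      = dcol n l j ^ 2 + (if h : (j:ℕ)+1 < n then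
          ((n - ((j:ℕ)+1) : ℕ) : ℝ) * (dcol n l j - l * dcol n l ⟨(j:ℕ)+1, h⟩) ^ 2 else 0) := by
    intro j
    by_cases h : (j:ℕ)+1 < n
    · rw [dif_pos h]
      have he : ∀ i : Fin n, (Amat n * Matrix.diagonal (dcol n l) * Cinvmat n l) i j ^ 2 =
          (if j = i then dcol n l j ^ 2 else 0) +
          (if (j:ℕ) < (i:ℕ) then (dcol n l j - l * dcol n l ⟨(j:ℕ)+1, h⟩) ^ 2 else 0) := by
        intro i
        rw [hentry i j]
        by_cases h1 : (j:ℕ) < (i:ℕ)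
        · rw [dif_pos h1, if_pos h1, if_neg (show ¬ j = i from fun hc => by rw [hc] at h1; omega)]
          ring
        · rw [dif_neg h1, if_neg h1]
          by_cases h2 : j = i
          · rw [if_pos h2, if_pos h2]; ring
          · rw [if_neg h2, if_neg h2]; ring
      simp only [he]
      rw [Finset.sum_add_distrib]
      congr 1
      · simp [Finset.sum_ite_eq]
      · have := Fin.sum_univ_eq_sum_range
          (fun m => if (j:ℕ) < m then (dcol n l j - l * dcol n l ⟨(j:ℕ)+1, h⟩) ^ 2 else 0) n
        rw [this, count_aux]
    · rw [dif_neg h, add_zero]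
      have he : ∀ i : Fin n, (Amat n * Matrix.diagonal (dcol n l) * Cinvmat n l) i j ^ 2 =
          (if j = i then dcol n l j ^ 2 else 0) := by
        intro i
        rw [hentry i j]
        have hni : ¬ (j:ℕ) < (i:ℕ) := by have := i.isLt; omega
        rw [dif_neg hni]
        by_cases h2 : j = i
        · rw [if_pos h2, if_pos h2]
        · rw [if_neg h2, if_neg h2]; ring
      simp only [he]
      simp [Finset.sum_ite_eq]
  simp only [hcol]
  rw [Finset.sum_add_distrib]
  congr 1
  have hsum2 : (∑ j : Fin n, if h : (j:ℕ)+1 < n then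
        ((n - ((j:ℕ)+1) : ℕ) : ℝ) * (dcol n l j - l * dcol n l ⟨(j:ℕ)+1, h⟩) ^ 2 else 0)
      = ∑ m ∈ Finset.range n, (if h : m+1 < n then
        ((n - (m+1) : ℕ) : ℝ) * (dcol n l ⟨m, by omega⟩ - l * dcol n l ⟨m+1, h⟩) ^ 2 else 0) :=
    Fin.sum_univ_eq_sum_range (fun m => if h : m+1 < n then
      ((n - (m+1) : ℕ) : ℝ) *
        (dcol n l ⟨m, Nat.lt_of_succ_lt h⟩ - l * dcol n l ⟨m+1, h⟩) ^ 2 else 0) n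
  rw [hsum2]
  obtain ⟨m, rfl⟩ : ∃ m, n = m + 1 := ⟨n - 1, by omega⟩
  rw [Finset.sum_range_succ, dif_neg (by omega), add_zero]
  simp only [Nat.add_sub_cancel]
  apply Finset.sum_congr rfl
  intro j hj
  have hjm : j < m := Finset.mem_range.mp hj
  rw [dif_pos (show j + 1 < m + 1 by omega), dif_pos (show j + 1 < m + 1 by omega)]
  have : ((m + 1 - (j+1) : ℕ) : ℝ) = ((m:ℝ) + 1) - ((j:ℝ) + 1) := by
    push_cast [Nat.succ_sub_succ]
    have hj' : (j:ℝ) ≤ (m:ℝ) := by exact_mod_cast le_of_lt hjm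
    rw [Nat.cast_sub (le_of_lt hjm)]
    ring
  rw [this]
  push_cast
  ring
end
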